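/- arXiv:1806.05444 — 11 statements merged into one kernel-verified Lean document; each statement's English description precedes it below -/
import Mathlib

section
/- Fix a real number λ ∈ (0,1) and an integer d ≥ 2. Define q* : ℕ → ℝ by q*_0 = 1 and q*_i = λ^((d^i − 1)/(d − 1)) for i ≥ 1. Then: (a) 1 = q*_0 > q*_1 > q*_2 > ⋯ > 0 and q*_i → 0 as i → ∞; (b) λ·((q*_{i−1})^d − (q*_i)^d) = q*_i − q*_{i+1} for every i ≥ 1, so q* is a fixed point of the JSQ(d) fluid-limit equations; and (c) this fixed point is unique: if a sequence q : ℕ → ℝ satisfies q_0 = 1, 0 ≤ q_{i+1} ≤ q_i ≤ 1 for all i ≥ 0, q_i → 0 as i → ∞, and λ·(q_{i−1}^d − q_i^d) = q_i − q_{i+1} for every i ≥ 1, then q_i = q*_i for all i. -/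
open Filter

/-- **Unique fixed point of the JSQ(d) fluid limit.**
For `λ ∈ (0,1)` and integer `d ≥ 2`, the sequence `q*_0 = 1`,
`q*_i = λ^((d^i − 1)/(d − 1))` for `i ≥ 1` is strictly decreasing from `1` to `0`,
satisfies the stationarity equations `λ((q*_{i−1})^d − (q*_i)^d) = q*_i − q*_{i+1}`
for all `i ≥ 1`, and is the unique sequence with these properties. -/
theorem jsq_d_fluid_fixed_point
    (lam : ℝ) (hlam : lam ∈ Set.Ioo (0 : ℝ) 1)
    (d : ℕ) (hd : 2 ≤ d)
    (qstar : ℕ → ℝ)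
    (hq0 : qstar 0 = 1)
    (hqi : ∀ i : ℕ, 1 ≤ i →
      qstar i = lam ^ (((d : ℝ) ^ i - 1) / ((d : ℝ) - 1))) :
    StrictAnti qstar ∧
    (∀ i : ℕ, 0 < qstar i) ∧
    Tendsto qstar atTop (nhds 0) ∧
    (∀ i : ℕ, 1 ≤ i →
      lam * ((qstar (i - 1)) ^ d - (qstar i) ^ d) = qstar i - qstar (i + 1)) ∧
    (∀ q : ℕ → ℝ, q 0 = 1 →
      (∀ i : ℕ, 0 ≤ q (i + 1) ∧ q (i + 1) ≤ q i ∧ q i ≤ 1) →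
      Tendsto q atTop (nhds 0) →
      (∀ i : ℕ, 1 ≤ i →
        lam * ((q (i - 1)) ^ d - (q i) ^ d) = q i - q (i + 1)) →
      q = qstar) := by
  obtain ⟨hl0, hl1⟩ := hlam
  set e : ℕ → ℝ := fun i => ((d : ℝ) ^ i - 1) / ((d : ℝ) - 1) with he
  have hd1 : (1 : ℝ) < (d : ℝ) := by
    exact_mod_cast lt_of_lt_of_le one_lt_two (by exact_mod_cast hd)
  have hdne : (d : ℝ) - 1 ≠ 0 := sub_ne_zero.mpr (ne_of_gt hd1)
  have hdpos : (0 : ℝ) < (d : ℝ) - 1 := sub_pos.mpr hd1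
  -- qstar in rpow form for all i
  have hqe : ∀ i : ℕ, qstar i = lam ^ (e i) := by
    intro i
    rcases Nat.eq_zero_or_pos i with h | h
    · subst h; simp [he, hq0]
    · exact hqi i h
  have estep : ∀ j : ℕ, e (j + 1) = 1 + e j * d := by
    intro j
    simp only [he]
    field_simp
    ring
  have emono : ∀ j : ℕ, e j < e (j + 1) := by
    intro j
    simp only [he]
    rw [div_lt_div_iff_of_pos_right hdpos]
    have : ((d : ℝ)) ^ j < (d : ℝ) ^ (j + 1) :=
      pow_lt_pow_right₀ hd1 (Nat.lt_succ_self j)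
    linarith
  have ei_ge : ∀ i : ℕ, (i : ℝ) ≤ e i := by
    intro i
    rw [he, le_div_iff₀ hdpos]
    have := one_add_mul_le_pow (a := (d : ℝ) - 1) (by linarith) i
    simp only [add_sub_cancel] at this
    nlinarith
  -- key multiplicative step
  have key : ∀ j : ℕ, lam * (lam ^ (e j)) ^ d = lam ^ (e (j + 1)) := by
    intro j
    rw [← Real.rpow_natCast (lam ^ (e j)) d, ← Real.rpow_mul hl0.le,
      estep j, Real.rpow_add hl0, Real.rpow_one]
  have hpos : ∀ i : ℕ, 0 < qstar i := by
    intro i; rw [hqe i]; exact Real.rpow_pos_of_pos hl0 _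
  have hanti : StrictAnti qstar := by
    apply strictAnti_nat_of_succ_lt
    intro n
    rw [hqe n, hqe (n + 1)]
    exact Real.rpow_lt_rpow_of_exponent_gt hl0 hl1 (emono n)
  have htend : Tendsto qstar atTop (nhds 0) := by
    apply squeeze_zero (fun i => (hpos i).le) (g := fun i => lam ^ i)
    · intro i
      rw [hqe i, ← Real.rpow_natCast lam i]
      exact Real.rpow_le_rpow_of_exponent_ge hl0 hl1.le (ei_ge i)
    · exact tendsto_pow_atTop_nhds_zero_of_lt_one hl0.le hl1
  have hfixstar : ∀ i : ℕ, 1 ≤ i →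
      lam * ((qstar (i - 1)) ^ d - (qstar i) ^ d) = qstar i - qstar (i + 1) := by
    intro i hi
    obtain ⟨j, rfl⟩ := Nat.exists_eq_add_of_le hi
    rw [add_comm 1 j, mul_sub, Nat.add_sub_cancel, hqe j, hqe (j + 1), hqe (j + 1 + 1),
      key j, key (j + 1)]
  refine ⟨hanti, hpos, htend, hfixstar, ?_⟩
  intro q hq0' hmono hqtend hfix
  -- step 1: q (n+1) = lam * q n ^ d for all n
  have hstep : ∀ n : ℕ, q (n + 1) = lam * q n ^ d := by
    set f : ℕ → ℝ := fun n => lam * q n ^ d - q (n + 1) with hf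
    have hconst : ∀ n : ℕ, f n = f 0 := by
      intro n
      induction n with
      | zero => rfl
      | succ k ih =>
        have := hfix (k + 1) (Nat.le_add_left 1 k)
        simp only [Nat.add_sub_cancel] at this
        have : f k = f (k + 1) := by simp only [hf]; nlinarith [this]
        rw [← this, ih]
    have hftend : Tendsto f atTop (nhds 0) := by
      have h1 : Tendsto (fun n => q (n + 1)) atTop (nhds 0) :=
        hqtend.comp (tendsto_add_atTop_nat 1)
      have h2 : Tendsto (fun n => lam * q n ^ d) atTop (nhds (lam * 0 ^ d)) :=
        (hqtend.pow d).const_mul lam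
      have h2' : Tendsto (fun n => lam * q n ^ d) atTop (nhds 0) := by
        simpa [zero_pow (by omega : d ≠ 0)] using h2
      simpa using h2'.sub h1
    have hfconst : Tendsto f atTop (nhds (f 0)) := by
      have : f = fun _ => f 0 := funext hconst
      rw [this]; exact tendsto_const_nhds
    have hf0 : f 0 = 0 := tendsto_nhds_unique hfconst hftend
    intro n
    have := hconst n
    rw [hf0] at this
    simp only [hf] at this
    linarith
  -- step 2: induction
  funext n
  induction n with
  | zero => rw [hq0', hq0]
  | succ k ih =>
    rw [hstep k, ih, hqe k, key k, ← hqe (k + 1)]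
end

section
/- Fix λ ∈ (0,1). Among all nonincreasing sequences q : {1,2,…} → [0,1] with q_i → 0 as i → ∞ (setting q_0 := 1), the stationarity equations λ·p_{i−1}(q) = q_i − q_{i+1} hold for all i ≥ 1 if and only if q_1 = λ and q_i = 0 for all i ≥ 2. That is, (λ, 0, 0, …) is the unique fixed point of the fluid limit of the JSQ policy. -/
open Filter

/-- `m(q) = min {i : q_{i+1} < 1}` (with the convention `sInf ∅ = 0`). -/
noncomputable def mIdx (q : ℕ → ℝ) : ℕ := sInf {i : ℕ | q (i + 1) < 1}

/-- The coefficients `p_i(q)` appearing in the fluid limit of the JSQ policy: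
if `m(q) = 0` then `p_0 = 1` and `p_i = 0` for `i ≥ 1`; if `m(q) ≥ 1` then
`p_{m(q)−1} = min{(1 − q_{m(q)+1})/λ, 1}`, `p_{m(q)} = 1 − p_{m(q)−1}`, and
`p_i = 0` otherwise. -/
noncomputable def pCoef (lam : ℝ) (q : ℕ → ℝ) (i : ℕ) : ℝ :=
  if mIdx q = 0 then (if i = 0 then 1 else 0)
  else if i = mIdx q - 1 then min ((1 - q (mIdx q + 1)) / lam) 1
  else if i = mIdx q then 1 - min ((1 - q (mIdx q + 1)) / lam) 1
  else 0

/-- If `q` is eventually "constant step" from `N` on and tends to `0`, then `q N = 0`. -/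
lemma tail_const_zero (q : ℕ → ℝ) (N : ℕ)
    (h : ∀ i, N ≤ i → q (i + 1) = q i)
    (hlim : Tendsto q atTop (nhds 0)) : q N = 0 := by
  have hconst : ∀ i, N ≤ i → q i = q N := by
    intro i hi
    induction i, hi using Nat.le_induction with
    | base => rfl
    | succ n hn ih => rw [h n hn, ih]
  have h2 : Tendsto q atTop (nhds (q N)) := by
    apply Tendsto.congr' _ tendsto_const_nhds
    filter_upwards [eventually_ge_atTop N] with i hi
    exact (hconst i hi).symm
  exact (tendsto_nhds_unique h2 hlim)

/-- **Unique fixed point of the JSQ fluid limit.**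
For `λ ∈ (0,1)` and a nonincreasing sequence `q : {1,2,…} → [0,1]` with `q_i → 0`
(and `q_0 := 1`), the stationarity equations `λ p_{i−1}(q) = q_i − q_{i+1}` hold for
all `i ≥ 1` iff `q_1 = λ` and `q_i = 0` for all `i ≥ 2`. -/
theorem jsq_fluid_fixed_point
    (lam : ℝ) (hlam : lam ∈ Set.Ioo (0 : ℝ) 1)
    (q : ℕ → ℝ)
    (hq0 : q 0 = 1)
    (hmono : ∀ i : ℕ, 1 ≤ i → q (i + 1) ≤ q i)
    (hrange : ∀ i : ℕ, 1 ≤ i → q i ∈ Set.Icc (0 : ℝ) 1)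
    (hlim : Tendsto q atTop (nhds 0)) :
    (∀ i : ℕ, 1 ≤ i → lam * pCoef lam q (i - 1) = q i - q (i + 1)) ↔
      (q 1 = lam ∧ ∀ i : ℕ, 2 ≤ i → q i = 0) := by
  obtain ⟨hl0, hl1⟩ := hlam
  constructor
  · intro h
    -- the defining set of `mIdx` is nonempty
    have hev : ∀ᶠ n in atTop, q n < 1 := hlim.eventually_lt_const (by norm_num)
    obtain ⟨N, hN⟩ := eventually_atTop.mp hev
    have hSne : ({i : ℕ | q (i + 1) < 1}).Nonempty := ⟨N, hN (N + 1) (by omega)⟩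
    rcases Nat.eq_zero_or_pos (mIdx q) with hm | hm
    · -- mIdx q = 0
      have hp0 : pCoef lam q 0 = 1 := by simp [pCoef, hm]
      have hpi : ∀ i, 1 ≤ i → pCoef lam q i = 0 := by
        intro i hi
        simp only [pCoef, hm, if_pos]
        rw [if_neg (by omega)]
      have htail : ∀ i, 2 ≤ i → q (i + 1) = q i := by
        intro i hi
        have heq := h i (by omega)
        rw [hpi (i - 1) (by omega)] at heq
        linarith
      have hq2 : ∀ i, 2 ≤ i → q i = 0 := by
        intro i hi
        exact tail_const_zero q i (fun j hj => htail j (by omega)) hlim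
      refine ⟨?_, hq2⟩
      have h1 := h 1 le_rfl
      norm_num [hp0, hq2 2 le_rfl] at h1
      linarith
    · -- mIdx q ≥ 1 : contradiction
      exfalso
      have hmem : q (mIdx q + 1) < 1 := by
        have := Nat.sInf_mem hSne
        simpa [mIdx] using this
      have hqm1 : q (mIdx q) = 1 := by
        have hnot : mIdx q - 1 ∉ {i : ℕ | q (i + 1) < 1} :=
          Nat.notMem_of_lt_sInf (by simp only [mIdx] at hm ⊢; omega)
        have hlt : ¬ q (mIdx q - 1 + 1) < 1 := hnot
        have heq : mIdx q - 1 + 1 = mIdx q := by omega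
        rw [heq] at hlt
        have hr := hrange (mIdx q) hm
        have := hr.2
        linarith
      have hmne : mIdx q ≠ 0 := by omega
      -- equation at i = mIdx q
      have he1 := h (mIdx q) hm
      have hpm1 : pCoef lam q (mIdx q - 1) = min ((1 - q (mIdx q + 1)) / lam) 1 := by
        simp only [pCoef]
        rw [if_neg hmne]
        simp
      rw [hpm1, hqm1] at he1
      by_cases hcase : (1 - q (mIdx q + 1)) / lam ≤ 1
      · -- min is (1 - q(m+1))/lam
        rw [min_eq_left hcase] at he1
        -- equation at i = mIdx q + 1
        have he2 := h (mIdx q + 1) (by omega)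
        have hpm : pCoef lam q (mIdx q + 1 - 1) = 1 - min ((1 - q (mIdx q + 1)) / lam) 1 := by
          have : mIdx q + 1 - 1 = mIdx q := by omega
          rw [this]
          simp only [pCoef]
          rw [if_neg hmne, if_neg (by omega)]
          simp
        rw [hpm, min_eq_left hcase] at he2
        have hq2 : q (mIdx q + 1 + 1) = 1 - lam := by
          have hlam_ne : lam ≠ 0 := ne_of_gt hl0
          field_simp at he2
          linarith
        -- tail is constant from mIdx q + 2
        have htail : ∀ i, mIdx q + 2 ≤ i → q (i + 1) = q i := by
          intro i hi
          have heq := h i (by omega)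
          have hp : pCoef lam q (i - 1) = 0 := by
            simp only [pCoef]
            rw [if_neg hmne, if_neg (by omega), if_neg (by omega)]
          rw [hp] at heq
          linarith
        have := tail_const_zero q (mIdx q + 2) htail hlim
        have : (1 - lam : ℝ) = 0 := by
          rw [← hq2]
          convert this using 2
        linarith
      · -- min is 1, contradiction
        push_neg at hcase
        rw [min_eq_right (le_of_lt hcase)] at he1
        have : lam < 1 - q (mIdx q + 1) := (one_lt_div hl0).mp hcase
        linarith
  · rintro ⟨h1, h2⟩
    have hm0 : mIdx q = 0 := by
      apply Nat.sInf_eq_zero.mpr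
      left
      show q 1 < 1
      rw [h1]; exact hl1
    intro i hi
    by_cases h1i : i = 1
    · subst h1i
      have hp : pCoef lam q 0 = 1 := by simp [pCoef, hm0]
      norm_num [hp, h1, h2 2 le_rfl]
    · have hi2 : 2 ≤ i := by omega
      have hp : pCoef lam q (i - 1) = 0 := by
        simp only [pCoef, hm0, if_pos]
        rw [if_neg (by omega)]
      rw [hp, h2 i hi2, h2 (i + 1) (by omega)]
      ring
end

section
/- Fix λ > 0 and let K = ⌊λ⌋ and f = λ − K. Define q* : {1,2,…} → [0,1] by q*_i = 1 for 1 ≤ i ≤ K, q*_{K+1} = f, and q*_i = 0 for i ≥ K+2. Then: (a) q* is nonincreasing with q*_i → 0, it satisfies λ·p_{i−1}(q*) = i·(q*_i − q*_{i+1}) for every i ≥ 1, and ∑_{i≥1} q*_i = λ; and (b) q* is the unique such fixed point: any nonincreasing sequence q : {1,2,…} → [0,1] with q_i → 0 as i → ∞ satisfying λ·p_{i−1}(q) = i·(q_i − q_{i+1}) for all i ≥ 1 equals q*. -/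
open Filter

/-- The coefficients `p_i(q)` in the fluid limit of the JSQ policy with
infinite-server dynamics: if `m(q) = 0` then `p_0 = 1` and `p_i = 0` for `i ≥ 1`;
if `m(q) ≥ 1` then `p_{m(q)−1} = min{m(q)(1 − q_{m(q)+1})/λ, 1}`,
`p_{m(q)} = 1 − p_{m(q)−1}`, and `p_i = 0` otherwise. -/
noncomputable def pInf (lam : ℝ) (q : ℕ → ℝ) (i : ℕ) : ℝ :=
  if mIdx q = 0 then (if i = 0 then 1 else 0)
  else if i = mIdx q - 1 then min ((mIdx q : ℝ) * (1 - q (mIdx q + 1)) / lam) 1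
  else if i = mIdx q then 1 - min ((mIdx q : ℝ) * (1 - q (mIdx q + 1)) / lam) 1
  else 0

lemma pInf_mzero (lam : ℝ) {q : ℕ → ℝ} (h : mIdx q = 0) (j : ℕ) :
    pInf lam q j = if j = 0 then 1 else 0 := by
  unfold pInf; rw [if_pos h]

lemma pInf_low (lam : ℝ) {q : ℕ → ℝ} (h : mIdx q ≠ 0) :
    pInf lam q (mIdx q - 1) = min ((mIdx q : ℝ) * (1 - q (mIdx q + 1)) / lam) 1 := by
  unfold pInf; rw [if_neg h, if_pos rfl]

lemma pInf_mid (lam : ℝ) {q : ℕ → ℝ} (h : mIdx q ≠ 0) :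
    pInf lam q (mIdx q) = 1 - min ((mIdx q : ℝ) * (1 - q (mIdx q + 1)) / lam) 1 := by
  unfold pInf; rw [if_neg h, if_neg (by omega), if_pos rfl]

lemma pInf_other (lam : ℝ) {q : ℕ → ℝ} {j : ℕ} (h : mIdx q ≠ 0)
    (h1 : j ≠ mIdx q - 1) (h2 : j ≠ mIdx q) : pInf lam q j = 0 := by
  unfold pInf; rw [if_neg h, if_neg h1, if_neg h2]

lemma mIdx_eq_of {q : ℕ → ℝ} {K : ℕ} (h1 : ∀ j, j < K → q (j+1) = 1)
    (h2 : q (K+1) < 1) : mIdx q = K := by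
  unfold mIdx
  apply le_antisymm
  · exact Nat.sInf_le h2
  · apply le_csInf ⟨K, h2⟩
    intro b hb
    simp only [Set.mem_setOf_eq] at hb
    by_contra hlt
    push_neg at hlt
    rw [h1 b hlt] at hb
    exact lt_irrefl 1 hb

lemma tail_zero {q : ℕ → ℝ} (hq : Tendsto q atTop (nhds 0)) {N : ℕ}
    (hc : ∀ i, N ≤ i → q i = q (i+1)) : ∀ i, N ≤ i → q i = 0 := by
  intro i hi
  have hconst : ∀ j, i ≤ j → q j = q i := by
    intro j hj
    induction j, hj using Nat.le_induction with
    | base => rfl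
    | succ n hn ih => rw [← hc n (le_trans hi hn), ih]
  have h1 : Tendsto q atTop (nhds (q i)) :=
    tendsto_atTop_of_eventually_const hconst
  exact tendsto_nhds_unique h1 hq

/-- **Unique fixed point of the JSQ fluid limit with infinite-server dynamics.**
For `λ > 0`, `K = ⌊λ⌋`, `f = λ − K`, the sequence `q*_i = 1` for `1 ≤ i ≤ K`,
`q*_{K+1} = f`, `q*_i = 0` for `i ≥ K+2` is nonincreasing, tends to `0`,
satisfies `λ p_{i−1}(q*) = i (q*_i − q*_{i+1})` for all `i ≥ 1` and
`∑_{i≥1} q*_i = λ`; moreover it is the unique such fixed point. -/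
theorem jsq_infinite_server_fluid_fixed_point
    (lam : ℝ) (hlam : 0 < lam)
    (K : ℕ) (hK : K = ⌊lam⌋₊)
    (f : ℝ) (hf : f = lam - K)
    (qstar : ℕ → ℝ)
    (hq0 : qstar 0 = 1)
    (hqs : ∀ i : ℕ, 1 ≤ i →
      qstar i = if i ≤ K then 1 else if i = K + 1 then f else 0) :
    ((∀ i : ℕ, 1 ≤ i → qstar (i + 1) ≤ qstar i) ∧
     (∀ i : ℕ, 1 ≤ i → qstar i ∈ Set.Icc (0 : ℝ) 1) ∧
     Tendsto qstar atTop (nhds 0) ∧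
     (∀ i : ℕ, 1 ≤ i →
        lam * pInf lam qstar (i - 1) = (i : ℝ) * (qstar i - qstar (i + 1))) ∧
     (∑' i : ℕ, qstar (i + 1)) = lam) ∧
    (∀ q : ℕ → ℝ, q 0 = 1 →
      (∀ i : ℕ, 1 ≤ i → q (i + 1) ≤ q i) →
      (∀ i : ℕ, 1 ≤ i → q i ∈ Set.Icc (0 : ℝ) 1) →
      Tendsto q atTop (nhds 0) →
      (∀ i : ℕ, 1 ≤ i →
        lam * pInf lam q (i - 1) = (i : ℝ) * (q i - q (i + 1))) →
      ∀ i : ℕ, 1 ≤ i → q i = qstar i) := by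
  have hKle : (K : ℝ) ≤ lam := by rw [hK]; exact Nat.floor_le hlam.le
  have hKlt : lam < (K : ℝ) + 1 := by rw [hK]; exact Nat.lt_floor_add_one lam
  have hf0 : 0 ≤ f := by rw [hf]; linarith
  have hf1 : f < 1 := by rw [hf]; linarith
  have hlamKf : lam = (K : ℝ) + f := by rw [hf]; ring
  have hq_one : ∀ i, i ≤ K → qstar i = 1 := by
    intro i hi
    rcases Nat.eq_zero_or_pos i with h0 | h1
    · rw [h0, hq0]
    · rw [hqs i h1, if_pos hi]
  have hqK1 : qstar (K+1) = f := by
    rw [hqs (K+1) (by omega), if_neg (by omega), if_pos rfl]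
  have hq_zero : ∀ i, K + 2 ≤ i → qstar i = 0 := by
    intro i hi
    rw [hqs i (by omega), if_neg (by omega), if_neg (by omega)]
  have hm : mIdx qstar = K :=
    mIdx_eq_of (fun j hj => hq_one (j+1) (by omega)) (by rw [hqK1]; exact hf1)
  have hnn : ∀ i, 0 ≤ qstar i := by
    intro i
    by_cases h1 : i ≤ K
    · rw [hq_one i h1]; norm_num
    · by_cases h2 : i = K + 1
      · rw [h2, hqK1]; exact hf0
      · rw [hq_zero i (by omega)]
  have hle1 : ∀ i, qstar i ≤ 1 := by
    intro i
    by_cases h1 : i ≤ K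
    · rw [hq_one i h1]
    · by_cases h2 : i = K + 1
      · rw [h2, hqK1]; exact hf1.le
      · rw [hq_zero i (by omega)]; norm_num
  constructor
  · refine ⟨?_, fun i _ => ⟨hnn i, hle1 i⟩, ?_, ?_, ?_⟩
    · intro i hi
      by_cases h1 : i + 1 ≤ K
      · rw [hq_one (i+1) h1, hq_one i (by omega)]
      · by_cases h2 : i + 1 = K + 1
        · have hiK : i = K := by omega
          rw [h2, hqK1, hiK, hq_one K le_rfl]; exact hf1.le
        · rw [hq_zero (i+1) (by omega)]; exact hnn i
    · exact tendsto_atTop_of_eventually_const (i₀ := K + 2) (fun i hi => hq_zero i hi)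
    · intro i hi
      by_cases hK0 : K = 0
      · have hm0 : mIdx qstar = 0 := by rw [hm, hK0]
        rcases Nat.eq_or_lt_of_le hi with h1 | h2
        · have h1' : i = 1 := h1.symm
          subst h1'
          rw [pInf_mzero lam hm0, if_pos (by norm_num)]
          have e1 : qstar 1 = f := by rw [← hqK1, hK0]
          have e2 : qstar 2 = 0 := hq_zero 2 (by omega)
          rw [e1, e2]
          have hfl : f = lam := by rw [hf, hK0]; push_cast; ring
          rw [hfl]; push_cast; ring
        · rw [pInf_mzero lam hm0, if_neg (by omega),
            hq_zero i (by omega), hq_zero (i+1) (by omega)]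
          ring
      · have hmne : mIdx qstar ≠ 0 := by rw [hm]; exact hK0
        have hcmin : min ((K : ℝ) * (1 - f) / lam) 1 = (K : ℝ) * (1 - f) / lam := by
          apply min_eq_left
          rw [div_le_one hlam]
          have hK0' : (0:ℝ) ≤ (K:ℝ) := Nat.cast_nonneg K
          nlinarith
        have hplow : pInf lam qstar (K - 1) = (K : ℝ) * (1 - f) / lam := by
          have h := pInf_low lam hmne
          rw [hm, hqK1, hcmin] at h
          exact h
        have hpmid : pInf lam qstar K = 1 - (K : ℝ) * (1 - f) / lam := by
          have h := pInf_mid lam hmne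
          rw [hm, hqK1, hcmin] at h
          exact h
        have hpoth : ∀ j, j ≠ K - 1 → j ≠ K → pInf lam qstar j = 0 := by
          intro j h1 h2
          exact pInf_other lam hmne (by rw [hm]; exact h1) (by rw [hm]; exact h2)
        by_cases h1 : i < K
        · rw [hpoth (i-1) (by omega) (by omega),
            hq_one i (by omega), hq_one (i+1) (by omega)]
          ring
        · by_cases h2 : i = K
          · subst h2
            rw [hplow, hq_one i le_rfl, hqK1]
            field_simp
          · by_cases h3 : i = K + 1
            · subst h3
              rw [show K + 1 - 1 = K from rfl, hpmid, hqK1, hq_zero (K+1+1) (by omega)]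
              have hex : lam * (1 - (K : ℝ) * (1 - f) / lam) = lam - (K:ℝ)*(1-f) := by
                field_simp
              rw [hex, hlamKf]; push_cast; ring
            · rw [hpoth (i-1) (by omega) (by omega),
                hq_zero i (by omega), hq_zero (i+1) (by omega)]
              ring
    · rw [tsum_eq_sum (s := Finset.range (K+1))
        (by intro i hi; simp only [Finset.mem_range] at hi; exact hq_zero (i+1) (by omega))]
      rw [Finset.sum_range_succ, hqK1]
      have hones : ∀ i ∈ Finset.range K, qstar (i+1) = 1 := by
        intro i hi; simp only [Finset.mem_range] at hi; exact hq_one (i+1) (by omega)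
      rw [Finset.sum_congr rfl hones, Finset.sum_const, nsmul_eq_mul, mul_one,
        Finset.card_range]
      linarith
  · intro q hq0' hmono' hIcc' htend' heq'
    have hne : {i : ℕ | q (i+1) < 1}.Nonempty := by
      have h1 : ∀ᶠ n in atTop, q n < 1 := htend'.eventually_lt_const zero_lt_one
      rw [eventually_atTop] at h1
      obtain ⟨N, hN⟩ := h1
      exact ⟨N, hN (N+1) (by omega)⟩
    have hmmem : q (mIdx q + 1) < 1 := Nat.sInf_mem hne
    have hq1 : ∀ j, 1 ≤ j → j ≤ mIdx q → q j = 1 := by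
      intro j hj1 hj2
      have hlt : j - 1 < mIdx q := by omega
      have hnm : j - 1 ∉ {i : ℕ | q (i+1) < 1} := Nat.notMem_of_lt_sInf hlt
      simp only [Set.mem_setOf_eq, not_lt] at hnm
      have hj : j - 1 + 1 = j := by omega
      rw [hj] at hnm
      exact le_antisymm (hIcc' j hj1).2 hnm
    by_cases hm0 : mIdx q = 0
    · -- m = 0
      have htail : ∀ i, 2 ≤ i → q i = 0 := by
        apply tail_zero htend'
        intro i hi
        have h := heq' i (by omega)
        rw [pInf_mzero lam hm0, if_neg (by omega)] at h
        have hine : (i : ℝ) ≠ 0 := Nat.cast_ne_zero.mpr (by omega)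
        have hz : (i : ℝ) * (q i - q (i+1)) = 0 := by linarith
        rcases mul_eq_zero.mp hz with h' | h'
        · exact absurd h' hine
        · linarith
      have hq1lam : q 1 = lam := by
        have h := heq' 1 le_rfl
        rw [pInf_mzero lam hm0, if_pos (by norm_num)] at h
        have h2 : q 2 = 0 := htail 2 le_rfl
        push_cast at h
        rw [h2] at h
        linarith
      have hlam1 : lam < 1 := by
        have hmm := hmmem; rw [hm0] at hmm; rw [← hq1lam]; exact hmm
      have hK0 : K = 0 := by rw [hK]; exact Nat.floor_eq_zero.mpr hlam1
      intro i hi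
      rw [hqs i hi]
      by_cases h1 : i ≤ K
      · omega
      · by_cases h2 : i = K + 1
        · rw [if_neg h1, if_pos h2]
          have hi1 : i = 1 := by omega
          rw [hi1, hq1lam, hf, hK0]; push_cast; ring
        · rw [if_neg h1, if_neg h2]
          exact htail i (by omega)
    · -- m ≥ 1
      have hm1 : 1 ≤ mIdx q := by omega
      have hqm : q (mIdx q) = 1 := hq1 (mIdx q) hm1 le_rfl
      have htail : ∀ i, mIdx q + 2 ≤ i → q i = 0 := by
        apply tail_zero htend'
        intro i hi
        have h := heq' i (by omega)
        rw [pInf_other lam hm0 (j := i - 1) (by omega) (by omega)] at h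
        have hine : (i : ℝ) ≠ 0 := Nat.cast_ne_zero.mpr (by omega)
        have hz : (i : ℝ) * (q i - q (i+1)) = 0 := by linarith
        rcases mul_eq_zero.mp hz with h' | h'
        · exact absurd h' hine
        · linarith
      have heqm : lam * min ((mIdx q : ℝ) * (1 - q (mIdx q + 1)) / lam) 1
          = (mIdx q : ℝ) * (1 - q (mIdx q + 1)) := by
        have h := heq' (mIdx q) hm1
        rw [pInf_low lam hm0, hqm] at h
        exact h
      have heqm1 : lam * (1 - min ((mIdx q : ℝ) * (1 - q (mIdx q + 1)) / lam) 1)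
          = ((mIdx q : ℝ) + 1) * (q (mIdx q + 1) - 0) := by
        have h := heq' (mIdx q + 1) (by omega)
        rw [Nat.add_sub_cancel, pInf_mid lam hm0, htail (mIdx q + 1 + 1) (by omega)] at h
        push_cast at h
        exact h
      have hxval : q (mIdx q + 1) = lam - (mIdx q : ℝ) := by
        linear_combination (-1 : ℝ) * heqm - heqm1
      have hx0 : 0 ≤ q (mIdx q + 1) := (hIcc' (mIdx q + 1) (by omega)).1
      have hx1 : q (mIdx q + 1) < 1 := hmmem
      have hKm : K = mIdx q := by
        rw [hK]
        apply (Nat.floor_eq_iff hlam.le).mpr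
        constructor
        · linarith
        · linarith
      intro i hi
      rw [hqs i hi]
      by_cases h1 : i ≤ K
      · rw [if_pos h1]
        exact hq1 i hi (by omega)
      · by_cases h2 : i = K + 1
        · rw [if_neg h1, if_pos h2, h2, hKm, hxval, hf, hKm]
        · rw [if_neg h1, if_neg h2]
          exact htail i (by omega)
end

section
/- Fix λ ∈ (0,1), μ > 0, ν > 0, and an integer buffer size B ≥ 1. Consider states (q_1,…,q_B, δ_0, δ_1) with 1 ≥ q_1 ≥ q_2 ≥ ⋯ ≥ q_B ≥ 0 (setting q_{B+1} := 0), δ_0 ≥ 0, δ_1 ≥ 0, and q_1 + δ_0 + δ_1 ≤ 1. With u, p_0, p_1,…,p_B and ξ' defined as in the TABS fluid-limit system, the stationarity conditions λ·p_{i−1} = q_i − q_{i+1} for i = 1,…,B, together with μ·u = ξ' and ξ' = ν·δ_1, hold if and only if q_1 = λ, q_i = 0 for 2 ≤ i ≤ B, δ_0 = 1 − λ, and δ_1 = 0. That is, the fluid limit of the TABS scheme with constant arrival rate λ < 1 has this state as its unique fixed point. -/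
/-
Summing the queue equations telescopes to `q₁ = λ (p₀ + ⋯ + p_{B-1})`, and since
`p₀ + ⋯ + p_{B-1} = p₀ + (1 - p₀)(q₁ - q_B)/q₁ ≤ 1`, every fixed point has `q₁ ≤ λ < 1`.
If `u > 0` then `p₀ = 1`, so `ξ' = 0 < μ u`; hence `u = 0`, `ξ' = 0` and `δ₁ = 0`. Then
`δ₀ = 1 - q₁ > 0`, so `ξ' = λ (1 - p₀) = 0` forces `p₀ = 1`, i.e. `p_i = 0` for `i ≥ 1`: all
arrivals go to idle servers, the telescoped equations give `q₁ = λ` and `q_i = 0` for `i ≥ 2`.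
-/

open Filter

/-- Fraction of idle-on servers: `u = 1 − q_1 − δ_0 − δ_1`. -/
noncomputable def tabsU (q : ℕ → ℝ) (d0 d1 : ℝ) : ℝ := 1 - q 1 - d0 - d1

/-- `p_0 = 1` if `u > 0`, and `p_0 = min{(δ_1 ν + q_1 − q_2)/λ, 1}` if `u = 0`
(for states with `u ≥ 0` only the case distinction `u > 0` vs `u = 0` matters). -/
noncomputable def tabsP0 (lam nu : ℝ) (q : ℕ → ℝ) (d0 d1 : ℝ) : ℝ :=
  if 0 < tabsU q d0 d1 then 1 else min ((d1 * nu + q 1 - q 2) / lam) 1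

/-- The task-assignment coefficients of the TABS fluid limit:
`p_i = (1 − p_0)(q_i − q_{i+1})/q_1` for `i ≥ 1` (set to `0` when `q_1 = 0`). -/
noncomputable def tabsP (lam nu : ℝ) (q : ℕ → ℝ) (d0 d1 : ℝ) (i : ℕ) : ℝ :=
  if i = 0 then tabsP0 lam nu q d0 d1
  else if 0 < q 1 then (1 - tabsP0 lam nu q d0 d1) * (q i - q (i + 1)) / q 1
  else 0

/-- The setup-initiation rate `ξ' = λ (1 − p_0) 1{δ_0 > 0}`. -/
noncomputable def tabsXi (lam nu : ℝ) (q : ℕ → ℝ) (d0 d1 : ℝ) : ℝ :=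
  lam * (1 - tabsP0 lam nu q d0 d1) * (if 0 < d0 then 1 else 0)

open Finset

lemma sub_eq_mul_sum_Ico_of_balance {R : Type*} [CommRing R] {lam : R} {p q : ℕ → R} {m n : ℕ}
    (hmn : m ≤ n) (h : ∀ k ∈ Ico m n, lam * p k = q (k + 1) - q (k + 2)) :
    q (m + 1) - q (n + 1) = lam * ∑ k ∈ Ico m n, p k := by
  rw [mul_sum, sum_congr rfl h, ← neg_sub, ← sum_Ico_sub (fun k => q (k + 1)) hmn,
    ← sum_neg_distrib]
  simp only [neg_sub]

section Tabs

variable {lam mu nu : ℝ} {B : ℕ} {q : ℕ → ℝ} {d0 d1 : ℝ}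

lemma tabsP0_le_one : tabsP0 lam nu q d0 d1 ≤ 1 := by
  unfold tabsP0
  split_ifs
  exacts [le_rfl, min_le_right _ _]

lemma tabsP0_eq_one_of_pos (hu : 0 < tabsU q d0 d1) : tabsP0 lam nu q d0 d1 = 1 := if_pos hu

lemma tabsXi_eq_zero_of_tabsP0_eq_one (h : tabsP0 lam nu q d0 d1 = 1) :
    tabsXi lam nu q d0 d1 = 0 := by
  simp [tabsXi, h]

lemma tabsP_zero : tabsP lam nu q d0 d1 0 = tabsP0 lam nu q d0 d1 := if_pos rfl

lemma tabsP_succ_of_tabsP0_eq_one (h : tabsP0 lam nu q d0 d1 = 1) (k : ℕ) :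
    tabsP lam nu q d0 d1 (k + 1) = 0 := by
  simp [tabsP, h]

lemma sum_range_succ_tabsP (hq : 0 < q 1) (n : ℕ) :
    ∑ k ∈ range (n + 1), tabsP lam nu q d0 d1 k =
      tabsP0 lam nu q d0 d1 + (1 - tabsP0 lam nu q d0 d1) * (q 1 - q (n + 1)) / q 1 := by
  simp only [sum_range_succ', tabsP, if_pos hq, Nat.succ_ne_zero, if_false, if_true]
  rw [← sum_div, ← mul_sum, sum_range_sub' (fun k => q (k + 1))]
  ring

lemma sum_range_tabsP_le_one (hB : 1 ≤ B) (hqB : 0 ≤ q B) :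
    ∑ k ∈ range B, tabsP lam nu q d0 d1 k ≤ 1 := by
  obtain ⟨n, rfl⟩ := Nat.exists_eq_add_of_le' hB
  have hp0 : tabsP0 lam nu q d0 d1 ≤ 1 := tabsP0_le_one
  rcases lt_or_ge 0 (q 1) with hq | hq
  · rw [sum_range_succ_tabsP hq, mul_div_assoc]
    have hfrac : (q 1 - q (n + 1)) / q 1 ≤ 1 := (div_le_one hq).2 (by linarith)
    linarith [mul_le_of_le_one_right (sub_nonneg.2 hp0) hfrac]
  · simpa [sum_range_succ', tabsP, hq.not_gt] using hp0

def IsTabsFixedPoint (lam mu nu : ℝ) (B : ℕ) (q : ℕ → ℝ) (d0 d1 : ℝ) : Prop :=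
  (∀ i : ℕ, 1 ≤ i → i ≤ B → lam * tabsP lam nu q d0 d1 (i - 1) = q i - q (i + 1)) ∧
    mu * tabsU q d0 d1 = tabsXi lam nu q d0 d1 ∧ tabsXi lam nu q d0 d1 = nu * d1

namespace IsTabsFixedPoint

variable (h : IsTabsFixedPoint lam mu nu B q d0 d1)
include h

lemma sub_eq_mul_sum_Ico {m : ℕ} (hm : m ≤ B) :
    q (m + 1) - q (B + 1) = lam * ∑ k ∈ Ico m B, tabsP lam nu q d0 d1 k :=
  sub_eq_mul_sum_Ico_of_balance hm fun k hk => by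
    simpa using h.1 (k + 1) (by omega) (mem_Ico.1 hk).2

lemma q_one_le (hlam : 0 ≤ lam) (hB : 1 ≤ B) (hqB : 0 ≤ q B) (htail : q (B + 1) = 0) :
    q 1 ≤ lam := by
  have hq1 := h.sub_eq_mul_sum_Ico (Nat.zero_le B)
  rw [htail, sub_zero, ← range_eq_Ico] at hq1
  rw [hq1]
  exact mul_le_of_le_one_right hlam (sum_range_tabsP_le_one hB hqB)

lemma tabsU_eq_zero (hmu : 0 < mu) (hsum : q 1 + d0 + d1 ≤ 1) : tabsU q d0 d1 = 0 := by
  have hu : 0 ≤ tabsU q d0 d1 := by unfold tabsU; linarith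
  refine hu.eq_or_lt.resolve_right (fun hpos => ?_) |>.symm
  have hxi := h.2.1
  rw [tabsXi_eq_zero_of_tabsP0_eq_one (tabsP0_eq_one_of_pos hpos)] at hxi
  exact (mul_pos hmu hpos).ne' hxi

lemma tabsXi_eq_zero (hmu : 0 < mu) (hsum : q 1 + d0 + d1 ≤ 1) : tabsXi lam nu q d0 d1 = 0 := by
  rw [← h.2.1, h.tabsU_eq_zero hmu hsum, mul_zero]

lemma d1_eq_zero (hmu : 0 < mu) (hnu : 0 < nu) (hsum : q 1 + d0 + d1 ≤ 1) : d1 = 0 := by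
  have hxi := h.2.2
  rw [h.tabsXi_eq_zero hmu hsum] at hxi
  exact (mul_eq_zero.1 hxi.symm).resolve_left hnu.ne'

lemma tabsP0_eq_one (hlam : lam ∈ Set.Ioo (0 : ℝ) 1) (hmu : 0 < mu) (hnu : 0 < nu)
    (hB : 1 ≤ B) (hqB : 0 ≤ q B) (htail : q (B + 1) = 0) (hsum : q 1 + d0 + d1 ≤ 1) :
    tabsP0 lam nu q d0 d1 = 1 := by
  have hu := h.tabsU_eq_zero hmu hsum
  have hd1 := h.d1_eq_zero hmu hnu hsum
  have hq1 := h.q_one_le hlam.1.le hB hqB htail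
  have hd0 : 0 < d0 := by unfold tabsU at hu; linarith [hlam.2]
  have hxi := h.tabsXi_eq_zero hmu hsum
  simp only [tabsXi, if_pos hd0, mul_one, mul_eq_zero, hlam.1.ne', false_or, sub_eq_zero] at hxi
  exact hxi.symm

lemma state_eq (hlam : lam ∈ Set.Ioo (0 : ℝ) 1) (hmu : 0 < mu) (hnu : 0 < nu)
    (hB : 1 ≤ B) (hqB : 0 ≤ q B) (htail : q (B + 1) = 0) (hsum : q 1 + d0 + d1 ≤ 1) :
    q 1 = lam ∧ (∀ i : ℕ, 2 ≤ i → i ≤ B → q i = 0) ∧ d0 = 1 - lam ∧ d1 = 0 := by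
  have hp0 := h.tabsP0_eq_one hlam hmu hnu hB hqB htail hsum
  have hd1 := h.d1_eq_zero hmu hnu hsum
  have hu := h.tabsU_eq_zero hmu hsum
  have hq1 : q 1 = lam := by
    obtain ⟨n, rfl⟩ := Nat.exists_eq_add_of_le' hB
    have := h.sub_eq_mul_sum_Ico (Nat.zero_le _)
    simpa [htail, ← range_eq_Ico, sum_range_succ', tabsP_succ_of_tabsP0_eq_one hp0,
      tabsP_zero, hp0] using this
  refine ⟨hq1, fun i hi hiB => ?_, by unfold tabsU at hu; linarith, hd1⟩
  obtain ⟨m, rfl⟩ := Nat.exists_eq_add_of_le' hi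
  have := h.sub_eq_mul_sum_Ico (m := m + 1) (by omega)
  rwa [htail, sub_zero, sum_eq_zero fun k hk => ?_, mul_zero] at this
  obtain ⟨j, rfl⟩ : ∃ j, k = j + 1 := ⟨k - 1, by have := (mem_Ico.1 hk).1; omega⟩
  exact tabsP_succ_of_tabsP0_eq_one hp0 j

end IsTabsFixedPoint

lemma isTabsFixedPoint_of_state_eq (hlam : lam ≠ 0) (hB : 1 ≤ B) (hq1 : q 1 = lam)
    (hq : ∀ i : ℕ, 2 ≤ i → i ≤ B → q i = 0) (htail : q (B + 1) = 0) :
    IsTabsFixedPoint lam mu nu B q (1 - lam) 0 := by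
  have hq' : ∀ i : ℕ, 2 ≤ i → i ≤ B + 1 → q i = 0 := fun i hi hiB =>
    (Nat.lt_or_eq_of_le hiB).elim (fun hlt => hq i hi (by omega)) (fun heq => heq ▸ htail)
  have hq2 := hq' 2 le_rfl (by omega)
  have hu : tabsU q (1 - lam) 0 = 0 := by unfold tabsU; rw [hq1]; ring
  have hp0 : tabsP0 lam nu q (1 - lam) 0 = 1 := by
    rw [tabsP0, hu, if_neg (lt_irrefl 0), hq1, hq2]
    simp [hlam]
  have hxi := tabsXi_eq_zero_of_tabsP0_eq_one hp0
  refine ⟨fun i hi hiB => ?_, by rw [hu, hxi, mul_zero], by rw [hxi, mul_zero]⟩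
  obtain rfl | hi := hi.eq_or_lt
  · simp [tabsP_zero, hp0, hq1, hq2]
  · obtain ⟨j, rfl⟩ : ∃ j, i = j + 2 := ⟨i - 2, by omega⟩
    rw [show j + 2 - 1 = j + 1 by omega, tabsP_succ_of_tabsP0_eq_one hp0, hq' _ hi (by omega),
      hq' _ (by omega) (by omega), mul_zero, sub_zero]

end Tabs

theorem tabs_fluid_fixed_point_general
    (lam mu nu : ℝ) (hlam : lam ∈ Set.Ioo (0 : ℝ) 1) (hmu : 0 < mu) (hnu : 0 < nu)
    (B : ℕ) (hB : 1 ≤ B)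
    (q : ℕ → ℝ) (d0 d1 : ℝ)
    (hqB : 0 ≤ q B)
    (htail : ∀ i : ℕ, B < i → q i = 0)
    (hsum : q 1 + d0 + d1 ≤ 1) :
    ((∀ i : ℕ, 1 ≤ i → i ≤ B →
        lam * tabsP lam nu q d0 d1 (i - 1) = q i - q (i + 1)) ∧
      mu * tabsU q d0 d1 = tabsXi lam nu q d0 d1 ∧
      tabsXi lam nu q d0 d1 = nu * d1) ↔
    (q 1 = lam ∧ (∀ i : ℕ, 2 ≤ i → i ≤ B → q i = 0) ∧ d0 = 1 - lam ∧ d1 = 0) := by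
  have htail' := htail _ B.lt_succ_self
  refine ⟨fun h => IsTabsFixedPoint.state_eq h hlam hmu hnu hB hqB htail' hsum, ?_⟩
  rintro ⟨hq1, hq, rfl, rfl⟩
  exact isTabsFixedPoint_of_state_eq hlam.1.ne' hB hq1 hq htail'

/-- **Unique fixed point of the TABS fluid limit.**
For `λ ∈ (0,1)`, `μ > 0`, `ν > 0`, buffer size `B ≥ 1`, and a state
`(q_1,…,q_B,δ_0,δ_1)` with `1 ≥ q_1 ≥ ⋯ ≥ q_B ≥ 0` (and `q_i = 0` for `i > B`),
`δ_0, δ_1 ≥ 0`, `q_1 + δ_0 + δ_1 ≤ 1`, the stationarity conditions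
`λ p_{i−1} = q_i − q_{i+1}` for `i = 1,…,B`, `μ u = ξ'`, `ξ' = ν δ_1` hold iff
`q_1 = λ`, `q_i = 0` for `2 ≤ i ≤ B`, `δ_0 = 1 − λ`, `δ_1 = 0`. -/
theorem tabs_fluid_fixed_point
    (lam mu nu : ℝ) (hlam : lam ∈ Set.Ioo (0 : ℝ) 1) (hmu : 0 < mu) (hnu : 0 < nu)
    (B : ℕ) (hB : 1 ≤ B)
    (q : ℕ → ℝ) (d0 d1 : ℝ)
    (hq1 : q 1 ≤ 1)
    (hmono : ∀ i : ℕ, 1 ≤ i → i < B → q (i + 1) ≤ q i)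
    (hqB : 0 ≤ q B)
    (htail : ∀ i : ℕ, B < i → q i = 0)
    (hd0 : 0 ≤ d0) (hd1 : 0 ≤ d1)
    (hsum : q 1 + d0 + d1 ≤ 1) :
    ((∀ i : ℕ, 1 ≤ i → i ≤ B →
        lam * tabsP lam nu q d0 d1 (i - 1) = q i - q (i + 1)) ∧
      mu * tabsU q d0 d1 = tabsXi lam nu q d0 d1 ∧
      tabsXi lam nu q d0 d1 = nu * d1) ↔
    (q 1 = lam ∧ (∀ i : ℕ, 2 ≤ i → i ≤ B → q i = 0) ∧ d0 = 1 - lam ∧ d1 = 0) :=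
  tabs_fluid_fixed_point_general lam mu nu hlam hmu hnu B hB q d0 d1 hqB htail hsum
end

section
/- Let g, d : ℕ → ℝ_{>0} be functions with g(N) → ∞ as N → ∞, g(N) ≤ N for all N, and d(N) ≤ N for all N. Suppose that either (i) liminf_{N→∞} g(N)/N > 0 and d(N) → ∞ as N → ∞, or (ii) g(N)/N → 0 and d(N)·g(N)/(N·log(N/g(N))) → ∞ as N → ∞. Then there exists a function n : ℕ → ℝ_{>0} such that n(N) → ∞, n(N)/g(N) → 0, and (n(N)/N)·d(N) − log(N/g(N)) → ∞ as N → ∞. -/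
open Filter Real Topology

/-! Take `n = g / √B` for the budget `B = d g / (N (log (N / g) + 1))` (capped below by `1` so
that `n > 0` for every `N`). In case (i) `g / N` eventually exceeds some `c > 0`, so
`log (N / g) ≤ log c⁻¹` and `B ≥ c d / (log c⁻¹ + 1)`; in case (ii) `log (N / g) → ∞`, so
eventually `B ≥ A / 2` for the given ratio `A`. Hence `B → ∞` in both cases. Then
`n / g = 1 / √B → 0`, and `d g / N = B (log (N / g) + 1)` gives
`n d / N - log (N / g) = √B (log (N / g) + 1) - log (N / g) ≥ √B → ∞`. Finally `d ≤ N` forces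
`B ≤ g`, so `n ≥ √g → ∞`. -/

lemma log_div_nonneg_of_le {x y : ℝ} (hx : 0 < x) (h : x ≤ y) : 0 ≤ log (y / x) :=
  log_nonneg ((one_le_div hx).2 h)

noncomputable def budget (g d : ℕ → ℝ) (N : ℕ) : ℝ :=
  d N * g N / (N * (log (N / g N) + 1))

noncomputable def sloppinessLevel (g d : ℕ → ℝ) (N : ℕ) : ℝ :=
  g N / √(max (budget g d N) 1)

section
variable {g d : ℕ → ℝ}

lemma budget_le {N : ℕ} (hg : 0 < g N) (hgN : g N ≤ N) (hdN : d N ≤ N) :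
    budget g d N ≤ g N := by
  have hN : (0 : ℝ) < N := hg.trans_le hgN
  have hL := log_div_nonneg_of_le hg hgN
  rw [budget, div_le_iff₀ (by positivity)]
  nlinarith [mul_le_mul_of_nonneg_right hdN hg.le,
    mul_nonneg (mul_nonneg hg.le (hg.le.trans hgN)) hL]

lemma budget_mul_log_add_one {N : ℕ} (hg : 0 < g N) (hgN : g N ≤ N) :
    budget g d N * (log (N / g N) + 1) = d N * g N / N := by
  have hL := log_div_nonneg_of_le hg hgN
  rw [budget, ← div_div, div_mul_cancel₀ _ (by positivity)]

lemma sloppinessLevel_pos (hg : ∀ N, 0 < g N) (N : ℕ) : 0 < sloppinessLevel g d N :=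
  div_pos (hg N) (sqrt_pos.2 (one_pos.trans_le (le_max_right _ _)))

lemma tendsto_sqrt_max_budget (hB : Tendsto (budget g d) atTop atTop) :
    Tendsto (fun N => √(max (budget g d N) 1)) atTop atTop :=
  tendsto_sqrt_atTop.comp (tendsto_atTop_mono (fun _ => le_max_left _ _) hB)

lemma tendsto_sloppinessLevel_div (hg : ∀ N, g N ≠ 0) (hB : Tendsto (budget g d) atTop atTop) :
    Tendsto (fun N => sloppinessLevel g d N / g N) atTop (𝓝 0) := by
  have h : ∀ N, sloppinessLevel g d N / g N = (√(max (budget g d N) 1))⁻¹ := fun N => by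
    rw [sloppinessLevel, div_right_comm, div_self (hg N), one_div]
  exact (tendsto_sqrt_max_budget hB).inv_tendsto_atTop.congr fun N => (h N).symm

lemma tendsto_sloppinessLevel_atTop (hgpos : ∀ N, 0 < g N) (hg : Tendsto g atTop atTop)
    (hgN : ∀ᶠ N in atTop, g N ≤ N) (hdN : ∀ᶠ N in atTop, d N ≤ N) :
    Tendsto (sloppinessLevel g d) atTop atTop := by
  refine tendsto_atTop_mono' _ ?_ (tendsto_sqrt_atTop.comp hg)
  filter_upwards [hgN, hdN, hg.eventually_ge_atTop 1] with N hgN hdN hg1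
  have hmax : max (budget g d N) 1 ≤ g N := max_le (budget_le (hgpos N) hgN hdN) hg1
  calc √(g N) = g N / √(g N) := div_sqrt.symm
    _ ≤ sloppinessLevel g d N :=
      div_le_div_of_nonneg_left (hgpos N).le (sqrt_pos.2 one_pos |>.trans_le
        (sqrt_le_sqrt (le_max_right _ _))) (sqrt_le_sqrt hmax)

lemma tendsto_sloppinessLevel_mul_sub_log (hgpos : ∀ N, 0 < g N)
    (hgN : ∀ᶠ N in atTop, g N ≤ N) (hB : Tendsto (budget g d) atTop atTop) :
    Tendsto (fun N : ℕ => sloppinessLevel g d N / N * d N - log (N / g N)) atTop atTop := by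
  refine tendsto_atTop_mono' _ ?_ (tendsto_sqrt_atTop.comp hB)
  filter_upwards [hgN, hB.eventually_ge_atTop 1] with N hgN hB1
  have hL := log_div_nonneg_of_le (hgpos N) hgN
  have hs : 1 ≤ √(budget g d N) := one_le_sqrt.2 hB1
  have key : sloppinessLevel g d N / N * d N = √(budget g d N) * (log (N / g N) + 1) := by
    rw [sloppinessLevel, max_eq_left hB1, div_div, div_mul_eq_mul_div, mul_comm (g N),
      mul_comm _ (N : ℝ), ← div_div, ← budget_mul_log_add_one (hgpos N) hgN, mul_div_right_comm,
      div_sqrt]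
  rw [key, Function.comp_apply]
  nlinarith

lemma tendsto_budget_of_liminf_pos (hgpos : ∀ N, 0 < g N) (hgN : ∀ᶠ N in atTop, g N ≤ N)
    (hlim : 0 < liminf (fun N : ℕ => g N / N) atTop) (hd : Tendsto d atTop atTop) :
    Tendsto (budget g d) atTop atTop := by
  obtain ⟨c, hc0, hc⟩ : ∃ c > 0, ∀ᶠ N : ℕ in atTop, c < g N / N :=
    ⟨_, half_pos hlim, eventually_lt_of_lt_liminf (half_lt_self hlim) <|
      isBoundedUnder_of_eventually_ge <| .of_forall fun N => div_nonneg (hgpos N).le N.cast_nonneg⟩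
  have hLK : ∀ N : ℕ, c < g N / N → log (N / g N) ≤ log c⁻¹ := fun N hcN => by
    rw [← inv_div]
    exact log_le_log (inv_pos.2 (hc0.trans hcN)) (inv_anti₀ hc0 hcN.le)
  have hK : 0 < log c⁻¹ + 1 := by
    obtain ⟨N, hgN, hcN⟩ := (hgN.and hc).exists
    linarith [log_div_nonneg_of_le (hgpos N) hgN, hLK N hcN]
  refine tendsto_atTop_mono' _ ?_ ((hd.const_mul_atTop hc0).atTop_div_const hK)
  filter_upwards [hgN, hc, hd.eventually_ge_atTop 0] with N hgN hcN hd0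
  have hL := log_div_nonneg_of_le (hgpos N) hgN
  calc c * d N / (log c⁻¹ + 1) ≤ d N * (g N / N) / (log (N / g N) + 1) := by
        rw [mul_comm c]
        exact div_le_div₀ (mul_nonneg hd0 (hc0.trans hcN).le)
          (mul_le_mul_of_nonneg_left hcN.le hd0) (by linarith) (by linarith [hLK N hcN])
    _ = budget g d N := by rw [budget, mul_div_assoc', div_div]

lemma tendsto_budget_of_tendsto_div_zero (hgpos : ∀ N, 0 < g N)
    (hg0 : Tendsto (fun N : ℕ => g N / N) atTop (𝓝 0))
    (hA : Tendsto (fun N : ℕ => d N * g N / (N * log (N / g N))) atTop atTop) :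
    Tendsto (budget g d) atTop atTop := by
  have hL : Tendsto (fun N : ℕ => log (N / g N)) atTop atTop := by
    have hg0' : Tendsto (fun N : ℕ => g N / N) atTop (𝓝[>] 0) :=
      tendsto_nhdsWithin_of_tendsto_nhds_of_eventually_within _ hg0 <| by
        filter_upwards [eventually_gt_atTop 0] with N hN
        exact div_pos (hgpos N) (Nat.cast_pos.2 hN)
    exact tendsto_log_atTop.comp (hg0'.inv_tendsto_nhdsGT_zero.congr fun N => by simp [inv_div])
  refine tendsto_atTop_mono' _ ?_ (hA.atTop_div_const two_pos)
  filter_upwards [hL.eventually_ge_atTop 1, hA.eventually_ge_atTop 0] with N hL1 hA0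
  rw [← div_div] at hA0 ⊢
  rw [budget, ← div_div, div_div]
  have hX : 0 ≤ d N * g N / N := by
    simpa only [div_mul_cancel₀ _ (one_pos.trans_le hL1).ne'] using
      mul_nonneg hA0 (zero_le_one.trans hL1)
  exact div_le_div_of_nonneg_left hX (by linarith) (by linarith)

end

theorem exists_sloppiness_level_general
    (g d : ℕ → ℝ)
    (hgpos : ∀ N, 0 < g N)
    (hgN : ∀ N : ℕ, 1 ≤ N → g N ≤ N) (hdN : ∀ N : ℕ, 1 ≤ N → d N ≤ N)
    (hginf : Tendsto g atTop atTop)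
    (hcase :
      (0 < Filter.liminf (fun N : ℕ => g N / N) atTop ∧
        Tendsto d atTop atTop) ∨
      (Tendsto (fun N : ℕ => g N / N) atTop (nhds 0) ∧
        Tendsto (fun N : ℕ => d N * g N / ((N : ℝ) * Real.log ((N : ℝ) / g N)))
          atTop atTop)) :
    ∃ n : ℕ → ℝ, (∀ N, 0 < n N) ∧
      Tendsto n atTop atTop ∧
      Tendsto (fun N : ℕ => n N / g N) atTop (nhds 0) ∧
      Tendsto (fun N : ℕ => (n N / N) * d N - Real.log ((N : ℝ) / g N))
        atTop atTop := by
  have hgN' : ∀ᶠ N in atTop, g N ≤ N := eventually_atTop.2 ⟨1, hgN⟩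
  have hB : Tendsto (budget g d) atTop atTop := by
    rcases hcase with ⟨hlim, hd⟩ | ⟨hg0, hA⟩
    · exact tendsto_budget_of_liminf_pos hgpos hgN' hlim hd
    · exact tendsto_budget_of_tendsto_div_zero hgpos hg0 hA
  exact ⟨sloppinessLevel g d, sloppinessLevel_pos hgpos,
    tendsto_sloppinessLevel_atTop hgpos hginf hgN' (eventually_atTop.2 ⟨1, hdN⟩),
    tendsto_sloppinessLevel_div (fun N => (hgpos N).ne') hB,
    tendsto_sloppinessLevel_mul_sub_log hgpos hgN' hB⟩

/-- **Existence of a suitable sloppiness level `n(N)`.**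
Given `g, d : ℕ → ℝ_{>0}` with `g(N) → ∞`, `g(N) ≤ N`, `d(N) ≤ N`, and either
(i) `liminf g(N)/N > 0` and `d(N) → ∞`, or
(ii) `g(N)/N → 0` and `d(N)·g(N)/(N·log(N/g(N))) → ∞`,
there exists `n : ℕ → ℝ_{>0}` with `n(N) → ∞`, `n(N)/g(N) → 0`, and
`(n(N)/N)·d(N) − log(N/g(N)) → ∞`. -/
theorem exists_sloppiness_level
    (g d : ℕ → ℝ)
    (hgpos : ∀ N, 0 < g N) (hdpos : ∀ N, 0 < d N)
    (hgN : ∀ N : ℕ, 1 ≤ N → g N ≤ N) (hdN : ∀ N : ℕ, 1 ≤ N → d N ≤ N)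
    (hginf : Tendsto g atTop atTop)
    (hcase :
      (0 < Filter.liminf (fun N : ℕ => g N / N) atTop ∧
        Tendsto d atTop atTop) ∨
      (Tendsto (fun N : ℕ => g N / N) atTop (nhds 0) ∧
        Tendsto (fun N : ℕ => d N * g N / ((N : ℝ) * Real.log ((N : ℝ) / g N)))
          atTop atTop)) :
    ∃ n : ℕ → ℝ, (∀ N, 0 < n N) ∧
      Tendsto n atTop atTop ∧
      Tendsto (fun N : ℕ => n N / g N) atTop (nhds 0) ∧
      Tendsto (fun N : ℕ => (n N / N) * d N - Real.log ((N : ℝ) / g N))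
        atTop atTop :=
  exists_sloppiness_level_general g d hgpos hgN hdN hginf hcase
end

section
/- Let G be a finite simple graph on a vertex set V with |V| = N, let 1 ≤ s ≤ N be an integer, and let c ≥ 0 be a real number such that com(U) ≤ c for every subset U ⊆ V with |U| = s. Then 2·|E(G)| ≥ (N − s)·(N − s − c)/s, where |E(G)| is the number of edges of G. -/
/-- `com(U)`: the number of vertices of `G` lying outside the closed
neighborhood `N[U]` of `U`. -/
def com {V : Type*} [Fintype V] [DecidableEq V]
    (G : SimpleGraph V) [DecidableRel G.Adj] (U : Finset V) : ℕ :=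
  (Finset.univ.filter (fun v => v ∉ U ∧ ∀ u ∈ U, ¬ G.Adj u v)).card

/-- **Edge-count lower bound from the well-connectedness measure `com`.**
If every `s`-element vertex subset `U` of a graph `G` on `N` vertices satisfies
`com(U) ≤ c`, then `2·|E(G)| ≥ (N − s)(N − s − c)/s`. -/
theorem edge_lower_bound_of_com
    {V : Type*} [Fintype V] [DecidableEq V]
    (G : SimpleGraph V) [DecidableRel G.Adj]
    (N : ℕ) (hN : Fintype.card V = N)
    (s : ℕ) (hs1 : 1 ≤ s) (hsN : s ≤ N)
    (c : ℝ) (hc : 0 ≤ c)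
    (hcom : ∀ U : Finset V, U.card = s → (com G U : ℝ) ≤ c) :
    ((N : ℝ) - s) * ((N : ℝ) - s - c) / s ≤ 2 * G.edgeFinset.card := by
  have hs0 : (0:ℝ) < s := by exact_mod_cast hs1
  have hNs : (0:ℝ) ≤ (N:ℝ) - s := by
    have : (s:ℝ) ≤ N := by exact_mod_cast hsN
    linarith
  by_cases hcase : (N:ℝ) - s - c ≤ 0
  · have h1 : ((N : ℝ) - s) * ((N : ℝ) - s - c) / s ≤ 0 := by
      apply div_nonpos_of_nonpos_of_nonneg _ hs0.le
      exact mul_nonpos_of_nonneg_of_nonpos hNs hcase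
    have h2 : (0:ℝ) ≤ 2 * G.edgeFinset.card := by positivity
    linarith
  push_neg at hcase
  -- choose U of card s minimizing the degree sum
  have hne : (Finset.univ.powersetCard s (α := V)).Nonempty := by
    rw [Finset.powersetCard_nonempty]
    simpa [hN] using hsN
  obtain ⟨U, hUmem, hmin⟩ := Finset.exists_min_image _
    (fun W => ∑ u ∈ W, G.degree u) hne
  obtain ⟨-, hUcard⟩ := Finset.mem_powersetCard.mp hUmem
  -- swap property: degrees in U are ≤ degrees outside U
  have hswap : ∀ u ∈ U, ∀ v, v ∉ U → G.degree u ≤ G.degree v := by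
    intro u hu v hv
    have hvne : v ∉ U.erase u := fun h => hv (Finset.mem_of_mem_erase h)
    have hcard' : (insert v (U.erase u)).card = s := by
      rw [Finset.card_insert_of_notMem hvne, Finset.card_erase_of_mem hu, hUcard]
      omega
    have hmem' : insert v (U.erase u) ∈ Finset.univ.powersetCard s :=
      Finset.mem_powersetCard.mpr ⟨Finset.subset_univ _, hcard'⟩
    have := hmin _ hmem'
    rw [Finset.sum_insert hvne] at this
    have h1 : ∑ x ∈ U, G.degree x = G.degree u + ∑ x ∈ U.erase u, G.degree x :=
      (Finset.add_sum_erase _ _ hu).symm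
    omega
  -- pick max-degree member of U
  have hUne : U.Nonempty := Finset.card_pos.mp (by omega)
  obtain ⟨u0, hu0, hu0max⟩ := Finset.exists_max_image U (fun u => G.degree u) hUne
  -- W = vertices outside U adjacent to U
  set W := Finset.univ.filter (fun v => v ∉ U ∧ ∃ u ∈ U, G.Adj u v) with hW
  have hsplit : W.card + com G U = N - s := by
    have h1 := Finset.card_filter_add_card_filter_not
      (s := Finset.univ.filter (fun v : V => v ∉ U))
      (p := fun v => ∃ u ∈ U, G.Adj u v)
    rw [Finset.filter_filter, Finset.filter_filter] at h1
    have hcardU : (Finset.univ.filter (fun v : V => v ∉ U)).card = N - s := by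
      rw [Finset.filter_not, Finset.card_sdiff_of_subset (Finset.filter_subset _ _)]
      simp [Finset.filter_mem_eq_inter, hN, hUcard, Finset.card_univ]
    rw [hcardU] at h1
    rw [← h1]
    have e1 : W = Finset.univ.filter (fun v => v ∉ U ∧ ∃ u ∈ U, G.Adj u v) := hW
    have e2 : (Finset.univ.filter (fun v => v ∉ U ∧ ∃ u ∈ U, G.Adj u v)).card
        = (Finset.univ.filter (fun a : V => a ∉ U ∧ ∃ u ∈ U, G.Adj u a)).card := rfl
    have e3 : com G U = (Finset.univ.filter (fun a : V => a ∉ U ∧ ¬∃ u ∈ U, G.Adj u a)).card := by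
      unfold com
      congr 1
      apply Finset.filter_congr
      intro v _
      simp
    rw [e1, e2, e3]
  -- W ⊆ ⋃ neighborhoods of U
  have hWsub : W ⊆ U.biUnion (fun u => G.neighborFinset u) := by
    intro v hv
    simp only [hW, Finset.mem_filter] at hv
    obtain ⟨-, -, u, hu, hadj⟩ := hv
    exact Finset.mem_biUnion.mpr ⟨u, hu, (SimpleGraph.mem_neighborFinset _ _ _).mpr hadj⟩
  have hWle : W.card ≤ ∑ u ∈ U, G.degree u := by
    calc W.card ≤ (U.biUnion (fun u => G.neighborFinset u)).card :=
          Finset.card_le_card hWsub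
      _ ≤ ∑ u ∈ U, (G.neighborFinset u).card := Finset.card_biUnion_le
      _ = ∑ u ∈ U, G.degree u := by simp [SimpleGraph.card_neighborFinset_eq_degree]
  have hsumle : ∑ u ∈ U, G.degree u ≤ s * G.degree u0 := by
    calc ∑ u ∈ U, G.degree u ≤ U.card * G.degree u0 :=
          Finset.sum_le_card_nsmul U _ _ (fun x hx => hu0max x hx)
      _ = s * G.degree u0 := by rw [hUcard]
  -- degree sum over complement of U
  have hcompl : (N - s) * G.degree u0 ≤ ∑ v ∈ Finset.univ \ U, G.degree v := by
    have hcard : (Finset.univ \ U).card = N - s := by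
      rw [Finset.card_sdiff_of_subset (Finset.subset_univ _), Finset.card_univ, hN, hUcard]
    calc (N - s) * G.degree u0 = (Finset.univ \ U).card * G.degree u0 := by rw [hcard]
      _ ≤ ∑ v ∈ Finset.univ \ U, G.degree v :=
          Finset.card_nsmul_le_sum _ _ _ (fun v hv => by
            exact hswap u0 hu0 v (Finset.mem_sdiff.mp hv).2)
  have hsumE : ∑ v ∈ Finset.univ \ U, G.degree v ≤ 2 * G.edgeFinset.card := by
    calc ∑ v ∈ Finset.univ \ U, G.degree v ≤ ∑ v, G.degree v :=
          Finset.sum_le_sum_of_subset (Finset.sdiff_subset)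
      _ = 2 * G.edgeFinset.card := G.sum_degrees_eq_twice_card_edges
  -- now pure real arithmetic
  have hcomle : (com G U : ℝ) ≤ c := hcom U hUcard
  have hWR : ((N:ℝ) - s) - c ≤ (W.card : ℝ) := by
    have h2 : ((W.card + com G U : ℕ) : ℝ) = ((N - s : ℕ) : ℝ) := by exact_mod_cast hsplit
    rw [Nat.cast_sub hsN] at h2
    push_cast at h2
    linarith
  set D : ℝ := (G.degree u0 : ℝ) with hD
  have hD1 : (N:ℝ) - s - c ≤ s * D := by
    have h1 : (W.card : ℝ) ≤ (s:ℝ) * D := by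
      have := hWle.trans hsumle
      rw [hD]; exact_mod_cast this
    linarith
  have hD2 : ((N:ℝ) - s) * D ≤ 2 * G.edgeFinset.card := by
    have h1 : ((N - s : ℕ) : ℝ) * D ≤ ((2 * G.edgeFinset.card : ℕ) : ℝ) := by
      rw [hD]; exact_mod_cast hcompl.trans hsumE
    rw [Nat.cast_sub hsN] at h1
    push_cast at h1 ⊢
    linarith
  have hDpos : 0 ≤ D := by positivity
  rw [div_le_iff₀ hs0]
  calc ((N:ℝ) - s) * ((N:ℝ) - s - c) ≤ ((N:ℝ) - s) * (s * D) :=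
        mul_le_mul_of_nonneg_left hD1 hNs
    _ = (s : ℝ) * (((N:ℝ) - s) * D) := by ring
    _ ≤ 2 * G.edgeFinset.card * s := by
        have := mul_le_mul_of_nonneg_left hD2 hs0.le
        linarith
end

section
/- Let (G_N)_{N≥1} be a sequence of finite simple graphs, where G_N has N vertices. For ε > 0 define dis_1(G_N, ε) := max{ com(U) : U ⊆ V_N, |U| ≥ ε·N }. If dis_1(G_N, ε)/N → 0 as N → ∞ for every ε > 0, then |E(G_N)|/N → ∞ as N → ∞, i.e., the total number of edges of G_N is ω(N). -/
open Filter

open scoped Classical in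
/-- `dis₁(G, ε) = max { com(U) : U ⊆ V, |U| ≥ ε·N }` for a graph `G` on `N`
vertices. -/
noncomputable def dis1 {N : ℕ} (G : SimpleGraph (Fin N)) [DecidableRel G.Adj]
    (ε : ℝ) : ℕ :=
  Finset.sup
    (Finset.univ.filter (fun U : Finset (Fin N) => ε * N ≤ (U.card : ℝ)))
    (com G)

lemma key (N c : ℕ) (hc : 1 ≤ c) (hN : 8 * (4*c+1) ≤ N)
    (G : SimpleGraph (Fin N)) [DecidableRel G.Adj]
    (hE : G.edgeFinset.card < c * N) :
    N ≤ 8 * dis1 G (((2*(4*c+1) : ℕ) : ℝ))⁻¹ := by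
  set q : ℕ := 4*c+1 with hq
  set m : ℕ := 2*q with hm
  have hq0 : 0 < q := by omega
  have hm0 : 0 < m := by omega
  set S : Finset (Fin N) := Finset.univ.filter (fun v => G.degree v ≤ 4*c) with hS
  -- bound on the complement of S
  have hsum : ∑ v, G.degree v = 2 * G.edgeFinset.card :=
    SimpleGraph.sum_degrees_eq_twice_card_edges G
  have hScq : Sᶜ.card * q ≤ 2 * (c * N) := by
    have h1 : Sᶜ.card * q ≤ ∑ v ∈ Sᶜ, G.degree v := by
      have h0 : Sᶜ.card • q ≤ ∑ v ∈ Sᶜ, G.degree v := by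
        refine Finset.card_nsmul_le_sum Sᶜ _ q (fun v hv => ?_)
        simp only [hS, Finset.mem_compl, Finset.mem_filter, Finset.mem_univ, true_and,
          not_le] at hv
        omega
      simpa using h0
    have h2 : ∑ v ∈ Sᶜ, G.degree v ≤ ∑ v, G.degree v :=
      Finset.sum_le_sum_of_subset (Finset.subset_univ _)
    omega
  have h2Sc : 2 * Sᶜ.card ≤ N := by
    have : (2 * Sᶜ.card) * q ≤ N * q := by
      calc (2 * Sᶜ.card) * q = 2 * (Sᶜ.card * q) := by ring
        _ ≤ 2 * (2 * (c * N)) := by omega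
        _ = (4*c) * N := by ring
        _ ≤ N * q := by rw [hq]; nlinarith
    exact Nat.le_of_mul_le_mul_right this hq0
  set k : ℕ := N / m + 1 with hk
  have hNmk : N < m * k := by
    have h1 := Nat.div_add_mod N m
    have h2 := Nat.mod_lt N hm0
    have h3 : N < m * (N/m) + m := by omega
    calc N < m * (N/m) + m := h3
      _ = m * k := by rw [hk]; ring
  have h2k : 2 * k ≤ N := by
    have ht : N / m ≤ N / 10 := Nat.div_le_div_left (by omega) (by norm_num)
    have ht2 : N / 10 * 10 ≤ N := Nat.div_mul_le_self N 10
    omega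
  have hkS : k ≤ S.card := by
    have := Finset.card_add_card_compl S
    simp only [Fintype.card_fin] at this
    omega
  obtain ⟨U, hUS, hUcard⟩ := Finset.exists_subset_card_eq hkS
  have hcard_cover : (U ∪ U.biUnion (fun u => G.neighborFinset u)).card ≤ k * q := by
    calc (U ∪ U.biUnion (fun u => G.neighborFinset u)).card
        ≤ U.card + (U.biUnion (fun u => G.neighborFinset u)).card :=
          Finset.card_union_le _ _
      _ ≤ U.card + ∑ u ∈ U, (G.neighborFinset u).card := by
          gcongr; exact Finset.card_biUnion_le
      _ ≤ k + k * (4*c) := by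
          have h4 : ∑ u ∈ U, (G.neighborFinset u).card ≤ U.card * (4*c) := by
            have h0 : ∑ u ∈ U, (G.neighborFinset u).card ≤ U.card • (4*c) := by
              refine Finset.sum_le_card_nsmul U _ (4*c) (fun u hu => ?_)
              have h5 := hUS hu
              simp only [hS, Finset.mem_filter, Finset.mem_univ, true_and] at h5
              simpa [SimpleGraph.card_neighborFinset_eq_degree] using h5
            simpa using h0
          rw [hUcard] at h4
          rw [hUcard]
          omega
      _ = k * q := by rw [hq]; ring
  have hcom : N - k * q ≤ com G U := by
    have key2 : ∀ t : Finset (Fin N),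
        (U ∪ U.biUnion (fun u => G.neighborFinset u))ᶜ ⊆ t → N - k * q ≤ t.card := by
      intro t ht
      have h1 := Finset.card_le_card ht
      have h2 : ((U ∪ U.biUnion (fun u => G.neighborFinset u))ᶜ).card =
          N - (U ∪ U.biUnion (fun u => G.neighborFinset u)).card := by
        rw [Finset.card_compl, Fintype.card_fin]
      omega
    unfold com
    refine key2 _ ?_
    intro v hv
    simp only [Finset.mem_compl, Finset.mem_union, Finset.mem_biUnion,
      SimpleGraph.mem_neighborFinset, not_or, not_exists] at hv
    simp only [Finset.mem_filter, Finset.mem_univ, true_and]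
    refine ⟨hv.1, fun u hu hadj => ?_⟩
    have h3 := hv.2 u
    simp only [not_and] at h3
    exact h3 hu hadj
  have hkq : k * q ≤ N / 2 + q := by
    have h1 : N / m = N / 2 / q := by rw [hm, Nat.div_div_eq_div_mul, Nat.mul_comm]
    have h2 : N / 2 / q * q ≤ N / 2 := Nat.div_mul_le_self _ q
    calc k * q = (N/m) * q + q := by rw [hk]; ring
      _ ≤ N / 2 + q := by rw [h1]; omega
  -- U is admissible for dis1
  have hdis : com G U ≤ dis1 G ((m : ℕ) : ℝ)⁻¹ := by
    unfold dis1
    apply Finset.le_sup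
    simp only [Finset.mem_filter, Finset.mem_univ, true_and]
    rw [hUcard, inv_mul_le_iff₀ (by positivity)]
    have hcast : (N : ℝ) < (m : ℝ) * k := by exact_mod_cast hNmk
    exact le_of_lt hcast
  omega

/-- **Fluid-scale optimality forces a super-linear number of edges.**
If `dis₁(G_N, ε)/N → 0` for every `ε > 0`, then `|E(G_N)|/N → ∞`,
i.e. the number of edges of `G_N` is `ω(N)`. -/
theorem edges_superlinear_of_dis1
    (G : (N : ℕ) → SimpleGraph (Fin N)) [∀ N, DecidableRel (G N).Adj]
    (h : ∀ ε : ℝ, 0 < ε →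
      Tendsto (fun N : ℕ => (dis1 (G N) ε : ℝ) / N) atTop (nhds 0)) :
    Tendsto (fun N : ℕ => ((G N).edgeFinset.card : ℝ) / N) atTop atTop := by
  rw [tendsto_atTop]
  intro C
  set c : ℕ := ⌈C⌉₊ + 1 with hcdef
  have hc : 1 ≤ c := by omega
  set ε : ℝ := (((2*(4*c+1) : ℕ) : ℝ))⁻¹ with hεdef
  have hε : 0 < ε := by rw [hεdef]; positivity
  have hev1 : ∀ᶠ N : ℕ in atTop, (dis1 (G N) ε : ℝ) / N < 1/9 :=
    (h ε hε).eventually (Filter.Tendsto.eventually_lt_const (by norm_num) tendsto_id)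
  filter_upwards [hev1, eventually_ge_atTop (8 * (4*c+1))] with N hdis hNge
  have hN0 : 0 < N := by omega
  have hN0' : (0:ℝ) < N := by exact_mod_cast hN0
  have hdis' : 8 * dis1 (G N) ε < N := by
    have h1 : (dis1 (G N) ε : ℝ) < N / 9 := by
      rw [div_lt_iff₀ hN0'] at hdis
      linarith
    have h2 : (9 * dis1 (G N) ε : ℝ) < N := by linarith
    have h3 : 9 * dis1 (G N) ε < N := by exact_mod_cast h2
    omega
  have hedge : c * N ≤ (G N).edgeFinset.card := by
    by_contra hlt
    push_neg at hlt
    have hk := key N c hc hNge (G N) hlt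
    rw [← hεdef] at hk
    omega
  have : (c : ℝ) ≤ ((G N).edgeFinset.card : ℝ) / N := by
    rw [le_div_iff₀ hN0']
    exact_mod_cast hedge
  calc C ≤ (⌈C⌉₊ : ℝ) := Nat.le_ceil C
    _ ≤ (c : ℝ) := by exact_mod_cast Nat.le_of_lt (by omega)
    _ ≤ _ := this
end

section
/- Let (G_N)_{N≥1} be a sequence of finite simple graphs, where G_N has N vertices. For ε > 0 define dis_2(G_N, ε) := max{ com(U) : U ⊆ V_N, |U| ≥ ε·√N }. If dis_2(G_N, ε)/√N → 0 as N → ∞ for every ε > 0, then |E(G_N)|/N^{3/2} → ∞ as N → ∞, i.e., the total number of edges of G_N is ω(N·√N). -/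
/-!
A set `U` of vertices, all of degree `< t`, covers at most `|U|·t` vertices by its
closed neighborhood, so `N ≤ com(U) + |U|·t`. Hence if `⌈ε√N⌉·t + dis₂(G, ε) < N`,
fewer than `⌈ε√N⌉` vertices have degree `< t`, and summing degrees gives
`2|E| ≥ (N - ⌈ε√N⌉)·t`. Once `dis₂(G, ε) ≤ ε√N` one may take `t = ⌊√N / (4ε)⌋`,
so `|E| ≥ N^{3/2} / (32ε)` eventually, for every `ε > 0`.
-/

open Filter

open scoped Classical in
/-- `dis₂(G, ε) = max { com(U) : U ⊆ V, |U| ≥ ε·√N }` for a graph `G` on `N`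
vertices. -/
noncomputable def dis2 {N : ℕ} (G : SimpleGraph (Fin N)) [DecidableRel G.Adj]
    (ε : ℝ) : ℕ :=
  Finset.sup
    (Finset.univ.filter (fun U : Finset (Fin N) => ε * Real.sqrt N ≤ (U.card : ℝ)))
    (com G)

open Finset

section com

variable {V : Type*} [Fintype V] (G : SimpleGraph V) [DecidableRel G.Adj]

theorem card_le_com_add_sum_degree_add_one [DecidableEq V] (U : Finset V) :
    Fintype.card V ≤ com G U + ∑ u ∈ U, (G.degree u + 1) := by
  have hcover : (univ : Finset V) ⊆
      univ.filter (fun v => v ∉ U ∧ ∀ u ∈ U, ¬ G.Adj u v) ∪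
        (U ∪ U.biUnion fun u => G.neighborFinset u) := by
    intro v _
    simp only [mem_union, mem_filter, mem_univ, true_and, mem_biUnion,
      SimpleGraph.mem_neighborFinset]
    by_cases hv : v ∈ U
    · exact .inr (.inl hv)
    by_cases hadj : ∃ u ∈ U, G.Adj u v
    · exact .inr (.inr hadj)
    · exact .inl ⟨hv, fun u hu huv => hadj ⟨u, hu, huv⟩⟩
  have hnbhd :
      #(U ∪ U.biUnion fun u => G.neighborFinset u) ≤ ∑ u ∈ U, (G.degree u + 1) := by
    rw [sum_add_distrib, sum_const, smul_eq_mul, mul_one, add_comm]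
    refine (card_union_le _ _).trans (Nat.add_le_add_left ?_ _)
    exact card_biUnion_le.trans_eq (sum_congr rfl fun u _ => G.card_neighborFinset_eq_degree u)
  calc Fintype.card V = #(univ : Finset V) := card_univ.symm
    _ ≤ com G U + #(U ∪ U.biUnion fun u => G.neighborFinset u) :=
        (card_le_card hcover).trans (card_union_le _ _)
    _ ≤ com G U + ∑ u ∈ U, (G.degree u + 1) := Nat.add_le_add_left hnbhd _

theorem card_degree_lt_lt [DecidableEq V] {m t : ℕ}
    (h : ∀ U : Finset V, #U = m → com G U + m * t < Fintype.card V) :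
    #{v | G.degree v < t} < m := by
  by_contra! hm
  obtain ⟨U, hUlow, hUm⟩ := exists_subset_card_eq hm
  have hsum : ∑ u ∈ U, (G.degree u + 1) ≤ m * t := by
    calc ∑ u ∈ U, (G.degree u + 1) ≤ ∑ _u ∈ U, t :=
          sum_le_sum fun u hu => (mem_filter.1 (hUlow hu)).2
      _ = m * t := by rw [sum_const, hUm, smul_eq_mul]
  have := card_le_com_add_sum_degree_add_one G U
  have := h U hUm
  omega

theorem card_sub_mul_le_two_mul_card_edgeFinset {k t : ℕ} (h : #{v | G.degree v < t} ≤ k) :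
    (Fintype.card V - k) * t ≤ 2 * #G.edgeFinset := by
  have hhigh : Fintype.card V - k ≤ #{v | t ≤ G.degree v} := by
    have := card_filter_add_card_filter_not (s := univ) (fun v => G.degree v < t)
    simp only [not_lt, card_univ] at this
    omega
  calc (Fintype.card V - k) * t ≤ #{v | t ≤ G.degree v} * t := Nat.mul_le_mul_right _ hhigh
    _ ≤ ∑ v ∈ {v | t ≤ G.degree v}, G.degree v := by
        simpa only [smul_eq_mul] using card_nsmul_le_sum _ _ t fun v hv => (mem_filter.1 hv).2
    _ ≤ ∑ v, G.degree v := sum_le_sum_of_subset (subset_univ _)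
    _ = 2 * #G.edgeFinset := G.sum_degrees_eq_twice_card_edges

end com

section dis2

variable {N : ℕ} (G : SimpleGraph (Fin N)) [DecidableRel G.Adj]

theorem com_le_dis2 {ε : ℝ} {U : Finset (Fin N)} (hU : ε * √N ≤ #U) :
    com G U ≤ dis2 G ε := by
  classical
  exact le_sup (mem_filter.2 ⟨mem_univ U, hU⟩)

theorem sub_mul_le_two_mul_card_edgeFinset_of_dis2 {ε : ℝ} {m t : ℕ} (hm : ε * √N ≤ m)
    (hmt : m * t + dis2 G ε < N) : (N - m) * t ≤ 2 * #G.edgeFinset := by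
  have hlow : #{v | G.degree v < t} ≤ m := by
    refine (card_degree_lt_lt G fun U hU => ?_).le
    have := com_le_dis2 G (U := U) (hU ▸ hm)
    rw [Fintype.card_fin]
    omega
  simpa only [Fintype.card_fin] using card_sub_mul_le_two_mul_card_edgeFinset G hlow

theorem sqrt_pow_three_le_of_dis2_le {ε : ℝ} (hε : 0 < ε) (hε1 : 1 ≤ ε * √N)
    (hε8 : 8 * ε ≤ √N) (hdis : (dis2 G ε : ℝ) ≤ ε * √N) :
    √N ^ 3 ≤ 32 * ε * #G.edgeFinset := by
  set x := √N
  have hx0 : 0 < x := by linarith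
  have hN : (N : ℝ) = x ^ 2 := (Real.sq_sqrt N.cast_nonneg).symm
  set m := ⌈ε * x⌉₊
  set t := ⌊x / (4 * ε)⌋₊
  have hm : (m : ℝ) ≤ 2 * ε * x := by
    linarith [Nat.ceil_lt_add_one (by positivity : 0 ≤ ε * x)]
  have ht : (t : ℝ) ≤ x / (4 * ε) := Nat.floor_le (by positivity)
  have ht' : x / (8 * ε) ≤ t := by
    have h1 : 1 ≤ x / (8 * ε) := by rw [le_div_iff₀ (by positivity)]; linarith
    have h2 : x / (4 * ε) = 2 * (x / (8 * ε)) := by field_simp; ring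
    linarith [Nat.lt_floor_add_one (x / (4 * ε))]
  have hmt : (m : ℝ) * t ≤ x ^ 2 / 2 := by
    calc (m : ℝ) * t ≤ 2 * ε * x * (x / (4 * ε)) := by gcongr
      _ = x ^ 2 / 2 := by field_simp; ring
  have hmN : m ≤ N := by
    suffices (m : ℝ) ≤ N by exact_mod_cast this
    nlinarith
  have hedges := sub_mul_le_two_mul_card_edgeFinset_of_dis2 G (Nat.le_ceil _) (t := t) (by
    suffices (m : ℝ) * t + dis2 G ε < N by exact_mod_cast this
    nlinarith)
  have hedges' : ((N : ℝ) - m) * t ≤ 2 * #G.edgeFinset := by exact_mod_cast hedges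
  have hNm : 3 * x ^ 2 / 4 ≤ (N : ℝ) - m := by nlinarith
  calc x ^ 3 ≤ 32 * ε * (3 * x ^ 2 / 4 * (x / (8 * ε)) / 2) := by
        field_simp; nlinarith [pow_pos hx0 3]
    _ ≤ 32 * ε * (((N : ℝ) - m) * t / 2) := by gcongr; nlinarith
    _ ≤ 32 * ε * #G.edgeFinset := by gcongr; linarith

end dis2

theorem eventually_le_card_edgeFinset_div_rpow_of_dis2 (G : (N : ℕ) → SimpleGraph (Fin N))
    [∀ N, DecidableRel (G N).Adj] {ε : ℝ} (hε : 0 < ε)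
    (h : Tendsto (fun N : ℕ => (dis2 (G N) ε : ℝ) / √N) atTop (nhds 0)) :
    ∀ᶠ N : ℕ in atTop, 1 / (32 * ε) ≤ #(G N).edgeFinset / (N : ℝ) ^ ((3 : ℝ) / 2) := by
  have hsqrt : Tendsto (fun N : ℕ => √N) atTop atTop :=
    Real.tendsto_sqrt_atTop.comp tendsto_natCast_atTop_atTop
  filter_upwards [h.eventually_lt_const hε, hsqrt.eventually_ge_atTop (1 / ε),
    hsqrt.eventually_ge_atTop (8 * ε)] with N hdis hε1 hε8
  have hx0 : 0 < √(N : ℝ) := by linarith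
  rw [Real.rpow_div_two_eq_sqrt _ N.cast_nonneg, Real.rpow_ofNat, le_div_iff₀ (by positivity),
    div_mul_eq_mul_div, div_le_iff₀ (by positivity), one_mul, mul_comm]
  refine sqrt_pow_three_le_of_dis2_le (G N) hε ?_ hε8 ?_
  · rwa [div_le_iff₀ hε, mul_comm] at hε1
  · exact ((div_lt_iff₀ hx0).1 hdis).le

/-- **Diffusion-scale optimality forces `ω(N√N)` edges.**
If `dis₂(G_N, ε)/√N → 0` for every `ε > 0`, then `|E(G_N)|/N^{3/2} → ∞`,
i.e. the number of edges of `G_N` is `ω(N·√N)`. -/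
theorem edges_superlinear_of_dis2
    (G : (N : ℕ) → SimpleGraph (Fin N)) [∀ N, DecidableRel (G N).Adj]
    (h : ∀ ε : ℝ, 0 < ε →
      Tendsto (fun N : ℕ => (dis2 (G N) ε : ℝ) / Real.sqrt N) atTop (nhds 0)) :
    Tendsto (fun N : ℕ => ((G N).edgeFinset.card : ℝ) / (N : ℝ) ^ ((3 : ℝ) / 2))
      atTop atTop := by
  refine tendsto_atTop.2 fun K => ?_
  have hK : 0 < max K 1 := lt_max_of_lt_right one_pos
  have hε : 0 < 1 / (32 * max K 1) := by positivity
  filter_upwards [eventually_le_card_edgeFinset_div_rpow_of_dis2 G hε (h _ hε)] with N hN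
  calc K ≤ max K 1 := le_max_left _ _
    _ = 1 / (32 * (1 / (32 * max K 1))) := by field_simp
    _ ≤ _ := hN
end

section
/- Fix integers N ≥ 1 and B ≥ 1, and represent an ensemble of N stacks (each holding at most B items) together with a count of discarded items by a pair (Q, L), where Q : {1,…,B} → {0,…,N} is nonincreasing (Q_i = number of stacks with at least i items) and L ∈ ℕ. Suppose two ensembles (Q^A, L^A) and (Q^B, L^B) satisfy ∑_{i=m}^{B} Q^A_i + L^A ≤ ∑_{i=m}^{B} Q^B_i + L^B for every m ∈ {1,…,B}, and also L^A ≤ L^B. Then: (a) for any 1 ≤ n_A ≤ n_B ≤ N, after adding one item to the n_A-th ordered stack of ensemble A and one item to the n_B-th ordered stack of ensemble B, all of these inequalities (including L^A ≤ L^B) still hold; and (b) for any 1 ≤ k ≤ N, after removing one item from the k-th ordered stack in both ensembles, all of these inequalities (including L^A ≤ L^B) still hold. Consequently, if two ensembles follow Rule(n_A, n_B, k) with n_A ≤ n_B at every step starting from a common initial state, then ∑_{i=m}^{B} Q^A_i + L^A ≤ ∑_{i=m}^{B} Q^B_i + L^B is preserved for all m ≤ B throughout. -/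
/-- The height of the `n`-th ordered stack (stacks arranged in nondecreasing
order of height): `h_n(Q) = #{i ∈ {1,…,B} : Q_i ≥ N − n + 1}`. -/
def stackHeight (N B : ℕ) (Q : ℕ → ℕ) (n : ℕ) : ℕ :=
  ((Finset.Icc 1 B).filter (fun i => N - n + 1 ≤ Q i)).card

/-- Adding an item to the `n`-th ordered stack of the ensemble `(Q, L)`:
increment row `h_n(Q)+1` if `h_n(Q) < B`, otherwise discard the item. -/
def addItem (N B : ℕ) (Q : ℕ → ℕ) (L : ℕ) (n : ℕ) : (ℕ → ℕ) × ℕ :=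
  if stackHeight N B Q n < B then
    (fun i => if i = stackHeight N B Q n + 1 then Q i + 1 else Q i, L)
  else (Q, L + 1)

/-- Removing an item from the `k`-th ordered stack of the ensemble `(Q, L)`:
decrement row `h_k(Q)` if the stack is nonempty, otherwise do nothing. -/
def removeItem (N B : ℕ) (Q : ℕ → ℕ) (L : ℕ) (k : ℕ) : (ℕ → ℕ) × ℕ :=
  if 1 ≤ stackHeight N B Q k then
    (fun i => if i = stackHeight N B Q k then Q i - 1 else Q i, L)
  else (Q, L)

/-- A valid ensemble of `N` stacks of maximum height `B`: the row counts
`Q_1 ≥ Q_2 ≥ ⋯ ≥ Q_B` are nonincreasing and bounded by `N`. -/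
def ValidEnsemble (N B : ℕ) (Q : ℕ → ℕ) : Prop :=
  (∀ i, 1 ≤ i → i ≤ B → Q i ≤ N) ∧ (∀ i, 1 ≤ i → i < B → Q (i + 1) ≤ Q i)

/-- The ordering between two ensembles: all tail sums (plus discarded items)
are ordered, and the numbers of discarded items are ordered. -/
def EnsembleLE (B : ℕ) (pA pB : (ℕ → ℕ) × ℕ) : Prop :=
  (∀ m, 1 ≤ m → m ≤ B →
    (∑ i ∈ Finset.Icc m B, pA.1 i) + pA.2 ≤ (∑ i ∈ Finset.Icc m B, pB.1 i) + pB.2) ∧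
  pA.2 ≤ pB.2

/-- A single step in `Rule(n_A, n_B, k)`: either an item is added
(to the `n_A`-th stack of ensemble A and the `n_B`-th stack of ensemble B),
or an item is removed from the `k`-th stack of both ensembles. -/
inductive StackStep where
  | add (nA nB : ℕ) : StackStep
  | remove (k : ℕ) : StackStep

/-- Applying a step to ensemble A. -/
def applyA (N B : ℕ) (st : StackStep) (p : (ℕ → ℕ) × ℕ) : (ℕ → ℕ) × ℕ :=
  match st with
  | .add nA _ => addItem N B p.1 p.2 nA
  | .remove k => removeItem N B p.1 p.2 k

/-- Applying a step to ensemble B. -/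
def applyB (N B : ℕ) (st : StackStep) (p : (ℕ → ℕ) × ℕ) : (ℕ → ℕ) × ℕ :=
  match st with
  | .add _ nB => addItem N B p.1 p.2 nB
  | .remove k => removeItem N B p.1 p.2 k

/-- A step following `Rule(n_A, n_B, k)` with `n_A ≤ n_B`. -/
def ValidStep (N : ℕ) (st : StackStep) : Prop :=
  match st with
  | .add nA nB => 1 ≤ nA ∧ nA ≤ nB ∧ nB ≤ N
  | .remove k => 1 ≤ k ∧ k ≤ N

/-!
Write `S_m(Q, L) = ∑_{i=m}^{B} Q_i + L` for `1 ≤ m ≤ B + 1`, so that `S_{B+1} = L` and the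
ordering of two ensembles is `S_m^A ≤ S_m^B` for all such `m`. Adding an item to a stack of
height `h` raises `S_m` by one exactly for `m ≤ h + 1`; removing one from a nonempty stack of
height `h` lowers it by one exactly for `m ≤ h`. Since rows are nonincreasing, `h_n(Q) ≥ j`
iff `Q_j ≥ N - n + 1`. So the ordering can only break at an `m` where the step moves `S_m^A`
but not `S_m^B`, and there the stack heights exhibit a neighbouring row `j` with `Q^A_j > Q^B_j`
(`j = m - 1` when adding with `n_A ≤ n_B`, `j = m` when removing); together with
`S_j^A ≤ S_j^B`, resp. `S_{m+1}^A ≤ S_{m+1}^B`, this gives the needed slack of one.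
Both steps keep the rows nonincreasing, so the argument iterates along any run of the rule.
-/

open Finset

lemma ValidEnsemble.antitoneOn {N B : ℕ} {Q : ℕ → ℕ} (hQ : ValidEnsemble N B Q) :
    AntitoneOn Q (Set.Icc 1 B) :=
  antitoneOn_of_add_one_le Set.ordConnected_Icc fun a _ ha ha' => hQ.2 a ha.1 (by grind)

section StackHeight

variable {N B n i : ℕ} {Q : ℕ → ℕ}

lemma stackHeight_le : stackHeight N B Q n ≤ B :=
  (card_filter_le _ _).trans (by simp)

lemma le_stackHeight_iff (hQ : AntitoneOn Q (Set.Icc 1 B)) (hi : 1 ≤ i) (hiB : i ≤ B) :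
    i ≤ stackHeight N B Q n ↔ N - n + 1 ≤ Q i := by
  constructor
  · intro hle
    by_contra! hlt
    have : stackHeight N B Q n ≤ i - 1 :=
      calc stackHeight N B Q n ≤ #(Ico 1 i) := card_le_card fun j hj => by
            simp only [mem_filter, mem_Icc] at hj
            by_contra hji
            have := hQ ⟨hi, hiB⟩ hj.1 (by rw [mem_Ico] at hji; omega)
            omega
        _ = i - 1 := Nat.card_Ico 1 i
    omega
  · intro hQi
    calc i = #(Icc 1 i) := by simp
      _ ≤ stackHeight N B Q n := card_le_card fun j hj => by
        simp only [mem_Icc] at hj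
        exact mem_filter.mpr ⟨mem_Icc.mpr ⟨hj.1, hj.2.trans hiB⟩,
          hQi.trans (hQ ⟨hj.1, hj.2.trans hiB⟩ ⟨hi, hiB⟩ hj.2)⟩

lemma le_apply_stackHeight (hQ : AntitoneOn Q (Set.Icc 1 B)) (h : 1 ≤ stackHeight N B Q n) :
    N - n + 1 ≤ Q (stackHeight N B Q n) :=
  (le_stackHeight_iff hQ h stackHeight_le).mp le_rfl

lemma apply_stackHeight_add_one_lt (hQ : AntitoneOn Q (Set.Icc 1 B))
    (h : stackHeight N B Q n < B) : Q (stackHeight N B Q n + 1) < N - n + 1 := by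
  by_contra! hle
  have := (le_stackHeight_iff hQ (by omega) h).mpr hle
  omega

end StackHeight

lemma sum_ite_eq_add_one (s : Finset ℕ) (j : ℕ) (Q : ℕ → ℕ) :
    ∑ i ∈ s, (if i = j then Q i + 1 else Q i) = ∑ i ∈ s, Q i + if j ∈ s then 1 else 0 := by
  rw [← sum_ite_eq' s j fun _ => 1, ← sum_add_distrib]
  exact sum_congr rfl fun i _ => by split_ifs <;> rfl

lemma sum_ite_eq_sub_one_add (s : Finset ℕ) {j : ℕ} {Q : ℕ → ℕ} (hj : 1 ≤ Q j) :
    ∑ i ∈ s, (if i = j then Q i - 1 else Q i) + (if j ∈ s then 1 else 0) = ∑ i ∈ s, Q i := by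
  rw [← sum_ite_eq' s j fun _ => 1, ← sum_add_distrib]
  exact sum_congr rfl fun i _ => by split_ifs with h <;> [subst h; skip] <;> omega

def tailSum (B : ℕ) (p : (ℕ → ℕ) × ℕ) (m : ℕ) : ℕ :=
  ∑ i ∈ Icc m B, p.1 i + p.2

section TailSum

variable {N B m : ℕ} {Q : ℕ → ℕ} {L : ℕ}

lemma tailSum_of_le {p : (ℕ → ℕ) × ℕ} (hm : m ≤ B) :
    tailSum B p m = p.1 m + tailSum B p (m + 1) := by
  rw [tailSum, tailSum, ← insert_Icc_add_one_left_eq_Icc hm, sum_insert (by simp), add_assoc]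

lemma ensembleLE_iff {pA pB : (ℕ → ℕ) × ℕ} :
    EnsembleLE B pA pB ↔ ∀ m, 1 ≤ m → m ≤ B + 1 → tailSum B pA m ≤ tailSum B pB m := by
  have hlast : ∀ p : (ℕ → ℕ) × ℕ, tailSum B p (B + 1) = p.2 := by simp [tailSum]
  refine ⟨fun h m hm hmB => ?_, fun h => ⟨fun m hm hmB => h m hm (by omega), ?_⟩⟩
  · rcases Nat.lt_or_eq_of_le hmB with hmB | rfl
    · exact h.1 m hm (by omega)
    · simpa only [hlast] using h.2
  · simpa only [hlast] using h (B + 1) (by omega) le_rfl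

lemma tailSum_addItem {n : ℕ} (hm : m ≤ B + 1) :
    tailSum B (addItem N B Q L n) m =
      tailSum B (Q, L) m + if m ≤ stackHeight N B Q n + 1 then 1 else 0 := by
  unfold addItem tailSum
  split_ifs with hlt hmh hmh
  · simp only [sum_ite_eq_add_one, mem_Icc, hmh, true_and, if_pos (Nat.succ_le_of_lt hlt)]
    omega
  · simp only [sum_ite_eq_add_one, mem_Icc, hmh, false_and, if_false]
    omega
  · rfl
  · have : stackHeight N B Q n ≤ B := stackHeight_le
    omega

lemma tailSum_removeItem {k : ℕ} (hQ : AntitoneOn Q (Set.Icc 1 B)) (hm : 1 ≤ m) :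
    tailSum B (removeItem N B Q L k) m + (if m ≤ stackHeight N B Q k then 1 else 0) =
      tailSum B (Q, L) m := by
  unfold removeItem tailSum
  by_cases hpos : 1 ≤ stackHeight N B Q k
  · have hrow := sum_ite_eq_sub_one_add (Icc m B)
      ((le_apply_stackHeight hQ hpos).trans' le_add_self)
    simp only [mem_Icc, stackHeight_le, and_true] at hrow
    rw [if_pos hpos]
    dsimp only
    split_ifs at hrow ⊢ <;> omega
  · rw [if_neg hpos, if_neg (by omega), add_zero]

end TailSum

section Ordering

variable {N B : ℕ} {QA QB : ℕ → ℕ} {LA LB : ℕ}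

theorem EnsembleLE.addItem (hA : AntitoneOn QA (Set.Icc 1 B)) (hB : AntitoneOn QB (Set.Icc 1 B))
    (hle : EnsembleLE B (QA, LA) (QB, LB)) {nA nB : ℕ} (hn : nA ≤ nB) :
    EnsembleLE B (addItem N B QA LA nA) (addItem N B QB LB nB) := by
  rw [ensembleLE_iff] at hle ⊢
  intro m hm hmB
  rw [tailSum_addItem hmB, tailSum_addItem hmB]
  by_cases hsafe : m ≤ stackHeight N B QB nB + 1 ∨ ¬ m ≤ stackHeight N B QA nA + 1
  · have := hle m hm hmB
    split_ifs <;> omega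
  -- the row `j = m - 1` lies in the `n_A`-th stack of A but above the `n_B`-th stack of B
  push Not at hsafe
  obtain ⟨houtB, hinA⟩ := hsafe
  obtain ⟨j, rfl⟩ : ∃ j, m = j + 1 := ⟨m - 1, by omega⟩
  have hjA : j ≤ stackHeight N B QA nA := by omega
  have hjB : j ≤ B := hjA.trans stackHeight_le
  have hrow : QB j < QA j := by
    have hA' := (le_stackHeight_iff hA (by omega) hjB).mp hjA
    have hB' := (le_stackHeight_iff hB (n := nB) (N := N) (by omega) hjB).not.mp (by omega)
    omega
  have := hle j (by omega) (by omega)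
  rw [tailSum_of_le (p := (QA, LA)) hjB, tailSum_of_le (p := (QB, LB)) hjB] at this
  rw [if_pos hinA, if_neg (by omega)]
  dsimp only at this
  omega

theorem EnsembleLE.removeItem (hA : AntitoneOn QA (Set.Icc 1 B))
    (hB : AntitoneOn QB (Set.Icc 1 B)) (hle : EnsembleLE B (QA, LA) (QB, LB)) {k : ℕ} :
    EnsembleLE B (removeItem N B QA LA k) (removeItem N B QB LB k) := by
  rw [ensembleLE_iff] at hle ⊢
  intro m hm hmB
  have htA := tailSum_removeItem (N := N) (L := LA) (k := k) hA hm
  have htB := tailSum_removeItem (N := N) (L := LB) (k := k) hB hm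
  by_cases hsafe : m ≤ stackHeight N B QA k ∨ ¬ m ≤ stackHeight N B QB k
  · have := hle m hm hmB
    split_ifs at htA htB <;> omega
  -- the row `m` lies in the `k`-th stack of B but not in that of A
  push Not at hsafe
  obtain ⟨houtA, hinB⟩ := hsafe
  have hmle : m ≤ B := hinB.trans stackHeight_le
  have hrow : QA m < QB m := by
    have hB' := (le_stackHeight_iff hB hm hmle).mp hinB
    have hA' := (le_stackHeight_iff hA (n := k) (N := N) hm hmle).not.mp (by omega)
    omega
  have := hle (m + 1) (by omega) (by omega)
  have hsA := tailSum_of_le (p := (QA, LA)) hmle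
  have hsB := tailSum_of_le (p := (QB, LB)) hmle
  rw [if_neg (by omega)] at htA
  rw [if_pos hinB] at htB
  dsimp only at hsA hsB
  omega

end Ordering

section Invariant

variable {N B L : ℕ} {Q : ℕ → ℕ}

lemma AntitoneOn.addItem_fst (hQ : AntitoneOn Q (Set.Icc 1 B)) {n : ℕ} :
    AntitoneOn (addItem N B Q L n).1 (Set.Icc 1 B) := by
  unfold addItem
  split_ifs with hlt
  · refine antitoneOn_of_add_one_le Set.ordConnected_Icc fun a _ ha ha' => ?_
    have hstep := hQ ha ha' a.le_succ
    have htop := apply_stackHeight_add_one_lt hQ hlt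
    have hbelow : a = stackHeight N B Q n → N - n + 1 ≤ Q a := fun h =>
      h ▸ le_apply_stackHeight hQ (h ▸ ha.1)
    dsimp only
    split_ifs <;> grind
  · exact hQ

lemma AntitoneOn.removeItem_fst (hQ : AntitoneOn Q (Set.Icc 1 B)) {k : ℕ} :
    AntitoneOn (removeItem N B Q L k).1 (Set.Icc 1 B) := by
  unfold removeItem
  split_ifs with hpos
  · refine antitoneOn_of_add_one_le Set.ordConnected_Icc fun a _ ha ha' => ?_
    have hstep := hQ ha ha' a.le_succ
    have hbot := le_apply_stackHeight hQ hpos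
    have habove : a = stackHeight N B Q k → Q (a + 1) < N - k + 1 := fun h =>
      h ▸ apply_stackHeight_add_one_lt hQ (h ▸ Nat.lt_of_succ_le ha'.2)
    dsimp only
    split_ifs <;> grind
  · exact hQ

end Invariant

section Rule

variable {N B : ℕ}

lemma AntitoneOn.applyA_fst {p : (ℕ → ℕ) × ℕ} (hp : AntitoneOn p.1 (Set.Icc 1 B))
    (st : StackStep) : AntitoneOn (applyA N B st p).1 (Set.Icc 1 B) := by
  cases st <;> [exact hp.addItem_fst; exact hp.removeItem_fst]

lemma AntitoneOn.applyB_fst {p : (ℕ → ℕ) × ℕ} (hp : AntitoneOn p.1 (Set.Icc 1 B))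
    (st : StackStep) : AntitoneOn (applyB N B st p).1 (Set.Icc 1 B) := by
  cases st <;> [exact hp.addItem_fst; exact hp.removeItem_fst]

theorem EnsembleLE.apply {pA pB : (ℕ → ℕ) × ℕ} (hA : AntitoneOn pA.1 (Set.Icc 1 B))
    (hB : AntitoneOn pB.1 (Set.Icc 1 B)) (hle : EnsembleLE B pA pB) {st : StackStep}
    (hst : ValidStep N st) : EnsembleLE B (applyA N B st pA) (applyB N B st pB) := by
  cases st with
  | add nA nB => exact hle.addItem hA hB hst.2.1
  | remove k => exact hle.removeItem hA hB

theorem EnsembleLE.foldl_apply {steps : List StackStep} (hsteps : ∀ st ∈ steps, ValidStep N st)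
    {pA pB : (ℕ → ℕ) × ℕ} (hA : AntitoneOn pA.1 (Set.Icc 1 B))
    (hB : AntitoneOn pB.1 (Set.Icc 1 B)) (hle : EnsembleLE B pA pB) :
    EnsembleLE B (steps.foldl (fun p st => applyA N B st p) pA)
      (steps.foldl (fun p st => applyB N B st p) pB) := by
  induction steps generalizing pA pB with
  | nil => exact hle
  | cons st steps ih =>
    exact ih (fun st' h => hsteps st' (List.mem_cons_of_mem _ h)) (hA.applyA_fst st)
      (hB.applyB_fst st) (hle.apply hA hB (hsteps st List.mem_cons_self))

end Rule

theorem ensemble_ordering_preserved_general (N B : ℕ) :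
    (∀ (QA QB : ℕ → ℕ) (LA LB : ℕ),
      ValidEnsemble N B QA → ValidEnsemble N B QB →
      EnsembleLE B (QA, LA) (QB, LB) →
      (∀ nA nB, 1 ≤ nA → nA ≤ nB → nB ≤ N →
        EnsembleLE B (addItem N B QA LA nA) (addItem N B QB LB nB)) ∧
      (∀ k, 1 ≤ k → k ≤ N →
        EnsembleLE B (removeItem N B QA LA k) (removeItem N B QB LB k))) ∧
    (∀ (Q0 : ℕ → ℕ) (L0 : ℕ), ValidEnsemble N B Q0 →
      ∀ steps : List StackStep, (∀ st ∈ steps, ValidStep N st) →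
        EnsembleLE B
          (steps.foldl (fun p st => applyA N B st p) (Q0, L0))
          (steps.foldl (fun p st => applyB N B st p) (Q0, L0))) := by
  refine ⟨fun QA QB LA LB hA hB hle => ⟨?_, ?_⟩, fun Q0 L0 hQ0 steps hsteps => ?_⟩
  · exact fun nA nB _ hn _ => hle.addItem hA.antitoneOn hB.antitoneOn hn
  · exact fun k _ _ => hle.removeItem hA.antitoneOn hB.antitoneOn
  · exact EnsembleLE.foldl_apply hsteps hQ0.antitoneOn hQ0.antitoneOn
      ⟨fun _ _ _ => le_rfl, le_rfl⟩

/-- **Deterministic ordering of ensembles of stacks (Proposition 1).**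
(a) Adding an item to the `n_A`-th stack of A and the `n_B`-th stack of B with
`n_A ≤ n_B` preserves the tail-sum ordering (including `L^A ≤ L^B`);
(b) removing an item from the `k`-th stack of both ensembles preserves it;
consequently, two ensembles following `Rule(n_A, n_B, k)` with `n_A ≤ n_B` at
every step, starting from a common state, remain ordered throughout. -/
theorem ensemble_ordering_preserved (N B : ℕ) (hN : 1 ≤ N) (hB : 1 ≤ B) :
    (∀ (QA QB : ℕ → ℕ) (LA LB : ℕ),
      ValidEnsemble N B QA → ValidEnsemble N B QB →
      EnsembleLE B (QA, LA) (QB, LB) →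
      (∀ nA nB, 1 ≤ nA → nA ≤ nB → nB ≤ N →
        EnsembleLE B (addItem N B QA LA nA) (addItem N B QB LB nB)) ∧
      (∀ k, 1 ≤ k → k ≤ N →
        EnsembleLE B (removeItem N B QA LA k) (removeItem N B QB LB k))) ∧
    (∀ (Q0 : ℕ → ℕ) (L0 : ℕ), ValidEnsemble N B Q0 →
      ∀ steps : List StackStep, (∀ st ∈ steps, ValidStep N st) →
        EnsembleLE B
          (steps.foldl (fun p st => applyA N B st p) (Q0, L0))
          (steps.foldl (fun p st => applyB N B st p) (Q0, L0))) :=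
  ensemble_ordering_preserved_general N B
end

section
/- Fix an integer N ≥ 1 and represent the occupancy state of a system of N servers with infinite buffers by a nonincreasing sequence Q : {1,2,…} → {0,…,N} with Q_i = 0 for all sufficiently large i (Q_i = number of servers with at least i tasks). Let Q^1 and Q^2 be two such states. Then: (a) if an arrival is assigned to the n-th ordered server in both states (for the same n with 1 ≤ n ≤ N), the resulting states Q'^1, Q'^2 satisfy ∑_i |Q'^1_i − Q'^2_i| ≤ ∑_i |Q^1_i − Q^2_i|; (b) if a potential departure occurs at the k-th ordered server in both states (for the same k with 1 ≤ k ≤ N), the same conclusion holds; and (c) if arrivals are assigned to the n_1-th ordered server in Q^1 and the n_2-th ordered server in Q^2 with possibly n_1 ≠ n_2, then ∑_i |Q'^1_i − Q'^2_i| ≤ ∑_i |Q^1_i − Q^2_i| + 2. Consequently, for two S-coupled systems the sum ∑_i |Q^1_i(t) − Q^2_i(t)| is bounded by twice the cumulative number of arrival epochs at which the two schemes differ in decision, provided the systems start from the same occupancy state. -/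
/-- The height (queue length) of the `n`-th ordered server:
`h_n(Q) = #{i ≥ 1 : Q_i ≥ N − n + 1}`. -/
noncomputable def srvHeight (N : ℕ) (Q : ℕ → ℕ) (n : ℕ) : ℕ :=
  {i : ℕ | 1 ≤ i ∧ N - n + 1 ≤ Q i}.ncard

/-- An arrival assigned to the `n`-th ordered server: `Q ↦ Q + e_{h_n(Q)+1}`. -/
noncomputable def arrive (N : ℕ) (Q : ℕ → ℕ) (n : ℕ) : ℕ → ℕ :=
  fun i => if i = srvHeight N Q n + 1 then Q i + 1 else Q i

/-- A potential departure at the `k`-th ordered server: `Q ↦ Q − e_{h_k(Q)}` if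
the `k`-th server is nonempty, and `Q` is unchanged otherwise. -/
noncomputable def depart (N : ℕ) (Q : ℕ → ℕ) (k : ℕ) : ℕ → ℕ :=
  fun i => if 1 ≤ srvHeight N Q k ∧ i = srvHeight N Q k then Q i - 1 else Q i

/-- Valid occupancy state of `N` servers: `Q : {1,2,…} → {0,…,N}` nonincreasing
and eventually zero. -/
def ValidOcc (N : ℕ) (Q : ℕ → ℕ) : Prop :=
  (∀ i, Q i ≤ N) ∧ (∀ i, 1 ≤ i → Q (i + 1) ≤ Q i) ∧ (∃ B, ∀ i, B < i → Q i = 0)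

/-- The ℓ¹ distance `∑_{i≥1} |Q¹_i − Q²_i|` between two occupancy states. -/
noncomputable def occDist (Q1 Q2 : ℕ → ℕ) : ℝ :=
  ∑' i : ℕ, |(Q1 (i + 1) : ℝ) - (Q2 (i + 1) : ℝ)|

/-- A step of the S-coupling: either an arrival (assigned to the `n₁`-th
ordered server in system 1 and the `n₂`-th in system 2) or a coupled potential
departure at the `k`-th ordered server of both systems. -/
inductive QStep where
  | arrival (n1 n2 : ℕ) : QStep
  | departure (k : ℕ) : QStep

/-- Applying a step to system 1. -/
noncomputable def applyQ1 (N : ℕ) (st : QStep) (Q : ℕ → ℕ) : ℕ → ℕ :=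
  match st with
  | .arrival n1 _ => arrive N Q n1
  | .departure k => depart N Q k

/-- Applying a step to system 2. -/
noncomputable def applyQ2 (N : ℕ) (st : QStep) (Q : ℕ → ℕ) : ℕ → ℕ :=
  match st with
  | .arrival _ n2 => arrive N Q n2
  | .departure k => depart N Q k

/-- Validity of a step of the S-coupling. -/
def ValidQStep (N : ℕ) (st : QStep) : Prop :=
  match st with
  | .arrival n1 n2 => 1 ≤ n1 ∧ n1 ≤ N ∧ 1 ≤ n2 ∧ n2 ≤ N
  | .departure k => 1 ≤ k ∧ k ≤ N

/-- The number of arrival epochs at which the two systems differ in decision. -/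
def diffCount (steps : List QStep) : ℕ :=
  (steps.filter (fun st => match st with
    | QStep.arrival n1 n2 => decide (n1 ≠ n2)
    | QStep.departure _ => false)).length

lemma validocc_anti {N : ℕ} {Q : ℕ → ℕ} (hQ : ValidOcc N Q) :
    ∀ {j i : ℕ}, 1 ≤ j → j ≤ i → Q i ≤ Q j := by
  intro j i hj hji
  induction i, hji using Nat.le_induction with
  | base => exact le_refl _
  | succ i hji ih => exact le_trans (hQ.2.1 i (le_trans hj hji)) ih

lemma srvHeight_spec {N : ℕ} {Q : ℕ → ℕ} (hQ : ValidOcc N Q) (n : ℕ) :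
    (∀ i, 1 ≤ i → i ≤ srvHeight N Q n → N - n + 1 ≤ Q i) ∧
    Q (srvHeight N Q n + 1) < N - n + 1 ∧
    (∀ i, 1 ≤ i → N - n + 1 ≤ Q i → i ≤ srvHeight N Q n) ∧
    (∀ B, (∀ i, B < i → Q i = 0) → srvHeight N Q n ≤ B) := by
  obtain ⟨B, hB⟩ := hQ.2.2
  set c := N - n + 1 with hc_def
  have hc : 1 ≤ c := Nat.le_add_left 1 _
  set S := {i : ℕ | 1 ≤ i ∧ c ≤ Q i} with hS_def
  have hsrv : srvHeight N Q n = S.ncard := rfl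
  have hSB : ∀ B', (∀ i, B' < i → Q i = 0) → S ⊆ Set.Icc 1 B' := by
    intro B' hB' i hi
    refine ⟨hi.1, ?_⟩
    by_contra hgt
    push_neg at hgt
    have h0 := hB' i hgt
    have h2 := hi.2
    omega
  have hfin : S.Finite := (Set.finite_Icc 1 B).subset (hSB B hB)
  have key1 : ∀ i, 1 ≤ i → c ≤ Q i → i ≤ S.ncard := by
    intro i h1 h2
    have hsub : Set.Icc 1 i ⊆ S := by
      intro j hj
      exact ⟨hj.1, le_trans h2 (validocc_anti hQ hj.1 hj.2)⟩
    have : (Set.Icc 1 i).ncard ≤ S.ncard := Set.ncard_le_ncard hsub hfin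
    rwa [← Finset.coe_Icc, Set.ncard_coe_finset, Nat.card_Icc, show i + 1 - 1 = i from rfl] at this
  have key2 : ∀ i, 1 ≤ i → i ≤ S.ncard → c ≤ Q i := by
    intro i h1 h2
    by_contra hlt
    push_neg at hlt
    have hsub : S ⊆ Set.Ico 1 i := by
      intro j hj
      refine ⟨hj.1, ?_⟩
      by_contra hge
      push_neg at hge
      have := validocc_anti hQ (j := i) (i := j) h1 hge
      have := hj.2
      omega
    have h3 : S.ncard ≤ (Set.Ico 1 i).ncard := Set.ncard_le_ncard hsub (Set.finite_Ico 1 i)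
    rw [← Finset.coe_Ico, Set.ncard_coe_finset, Nat.card_Ico] at h3
    omega
  refine ⟨fun i h1 h2 => key2 i h1 (by rwa [hsrv] at h2), ?_, fun i h1 h2 => by rw [hsrv]; exact key1 i h1 h2, ?_⟩
  · by_contra hge
    push_neg at hge
    have := key1 _ (Nat.le_add_left 1 _) hge
    omega
  · intro B' hB'
    have : S.ncard ≤ (Set.Icc 1 B').ncard := Set.ncard_le_ncard (hSB B' hB') (Set.finite_Icc 1 B')
    rw [← Finset.coe_Icc, Set.ncard_coe_finset, Nat.card_Icc] at this
    rw [hsrv]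
    omega

lemma validOcc_arrive {N : ℕ} {Q : ℕ → ℕ} (hQ : ValidOcc N Q) {n : ℕ}
    (hn1 : 1 ≤ n) (hnN : n ≤ N) : ValidOcc N (arrive N Q n) := by
  obtain ⟨spec1, spec2, spec3, spec4⟩ := srvHeight_spec hQ n
  set h := srvHeight N Q n with hh
  refine ⟨?_, ?_, ?_⟩
  · intro i
    simp only [arrive, ← hh]
    by_cases hie : i = h + 1
    · rw [if_pos hie, hie]
      have := spec2
      omega
    · rw [if_neg hie]
      exact hQ.1 i
  · intro i hi
    simp only [arrive, ← hh]
    have hne : ¬(i + 1 = h + 1 ∧ i = h + 1) := by omega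
    by_cases h1 : i + 1 = h + 1
    · have hi_eq : i = h := by omega
      rw [if_pos h1, if_neg (by omega)]
      have hQh : N - n + 1 ≤ Q h := spec1 h (by omega) (le_refl _)
      have := spec2
      subst hi_eq
      omega
    · rw [if_neg h1]
      by_cases h2 : i = h + 1
      · rw [if_pos h2]
        have := hQ.2.1 i hi
        omega
      · rw [if_neg h2]
        exact hQ.2.1 i hi
  · obtain ⟨B, hB⟩ := hQ.2.2
    refine ⟨B + 1, fun i hi => ?_⟩
    have hhB : h ≤ B := spec4 B hB
    simp only [arrive, ← hh]
    rw [if_neg (by omega)]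
    exact hB i (by omega)

lemma validOcc_depart {N : ℕ} {Q : ℕ → ℕ} (hQ : ValidOcc N Q) (k : ℕ) :
    ValidOcc N (depart N Q k) := by
  obtain ⟨spec1, spec2, spec3, spec4⟩ := srvHeight_spec hQ k
  set g := srvHeight N Q k with hg
  refine ⟨?_, ?_, ?_⟩
  · intro i
    simp only [depart, ← hg]
    split
    · exact le_trans (Nat.sub_le _ _) (hQ.1 i)
    · exact hQ.1 i
  · intro i hi
    simp only [depart, ← hg]
    by_cases h1 : 1 ≤ g
    · by_cases h3 : i + 1 = g
      · rw [if_pos ⟨h1, h3⟩, if_neg (by omega : ¬(1 ≤ g ∧ i = g))]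
        have := hQ.2.1 i hi
        omega
      · rw [if_neg (fun hc => h3 hc.2)]
        by_cases h2 : i = g
        · rw [if_pos ⟨h1, h2⟩]
          have hQg : N - k + 1 ≤ Q g := spec1 g h1 (le_refl _)
          have hs2 := spec2
          rw [h2]
          omega
        · rw [if_neg (fun hc => h2 hc.2)]
          exact hQ.2.1 i hi
    · rw [if_neg (fun hc => h1 hc.1), if_neg (fun hc => h1 hc.1)]
      exact hQ.2.1 i hi
  · obtain ⟨B, hB⟩ := hQ.2.2
    refine ⟨B, fun i hi => ?_⟩
    have := hB i hi
    simp only [depart, ← hg]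
    split <;> omega

lemma occDist_eq_sum {Q1 Q2 : ℕ → ℕ} {M : ℕ} (h : ∀ i, M ≤ i → Q1 (i + 1) = Q2 (i + 1)) :
    occDist Q1 Q2 = ∑ i ∈ Finset.range M, |(Q1 (i + 1) : ℝ) - (Q2 (i + 1) : ℝ)| := by
  apply tsum_eq_sum
  intro i hi
  rw [h i (by simpa using hi)]
  simp

lemma occDist_comm (Q1 Q2 : ℕ → ℕ) : occDist Q1 Q2 = occDist Q2 Q1 :=
  tsum_congr fun i => abs_sub_comm _ _

lemma summable_occ {Q1 Q2 : ℕ → ℕ} {M : ℕ} (h : ∀ i, M ≤ i → Q1 (i + 1) = Q2 (i + 1)) :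
    Summable (fun i : ℕ => |(Q1 (i + 1) : ℝ) - (Q2 (i + 1) : ℝ)|) := by
  apply summable_of_ne_finset_zero (s := Finset.range M)
  intro i hi
  rw [h i (by simpa using hi)]
  simp

lemma occDist_triangle {Q1 Q2 Q3 : ℕ → ℕ}
    (h12 : Summable (fun i : ℕ => |(Q1 (i + 1) : ℝ) - (Q2 (i + 1) : ℝ)|))
    (h23 : Summable (fun i : ℕ => |(Q2 (i + 1) : ℝ) - (Q3 (i + 1) : ℝ)|)) :
    occDist Q1 Q3 ≤ occDist Q1 Q2 + occDist Q2 Q3 := by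
  unfold occDist
  rw [← Summable.tsum_add h12 h23]
  refine Summable.tsum_le_tsum (fun i => abs_sub_le _ _ _) ?_ (h12.add h23)
  exact Summable.of_nonneg_of_le (fun i => abs_nonneg _) (fun i => abs_sub_le _ _ _) (h12.add h23)

lemma sum_eq_two {M a b : ℕ} (u v : ℕ → ℝ) (ha : a < M) (hb : b < M)
    (h : ∀ i, i ≠ a → i ≠ b → u i = v i) :
    ∑ i ∈ Finset.range M, u i - ∑ i ∈ Finset.range M, v i
      = ∑ i ∈ ({a, b} : Finset ℕ), (u i - v i) := by
  rw [← Finset.sum_sub_distrib]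
  refine (Finset.sum_subset ?_ ?_).symm
  · intro i hi
    simp only [Finset.mem_insert, Finset.mem_singleton] at hi
    rcases hi with rfl | rfl <;> simpa [Finset.mem_range]
  · intro i _ hi
    simp only [Finset.mem_insert, Finset.mem_singleton, not_or] at hi
    rw [h i hi.1 hi.2]
    ring

lemma occDist_arrive_self {N : ℕ} (Q : ℕ → ℕ) (n : ℕ) :
    occDist (arrive N Q n) Q = 1 := by
  unfold occDist
  rw [tsum_eq_single (srvHeight N Q n) ?_]
  · simp [arrive]
  · intro i hi
    simp only [arrive]
    rw [if_neg (by omega)]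
    simp

lemma arrive_same_aux {N n : ℕ} {Q1 Q2 : ℕ → ℕ} (hQ1 : ValidOcc N Q1) (hQ2 : ValidOcc N Q2)
    (hle : srvHeight N Q1 n ≤ srvHeight N Q2 n) :
    occDist (arrive N Q1 n) (arrive N Q2 n) ≤ occDist Q1 Q2 := by
  obtain ⟨s11, s12, s13, s14⟩ := srvHeight_spec hQ1 n
  obtain ⟨s21, s22, s23, s24⟩ := srvHeight_spec hQ2 n
  set h1 := srvHeight N Q1 n with hh1
  set h2 := srvHeight N Q2 n with hh2
  rcases eq_or_lt_of_le hle with heq | hlt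
  · apply le_of_eq
    apply tsum_congr
    intro i
    simp only [arrive, ← hh1, ← hh2, ← heq]
    by_cases hi : i + 1 = h1 + 1
    · rw [if_pos hi, if_pos hi]
      push_cast
      ring_nf
    · rw [if_neg hi, if_neg hi]
  · obtain ⟨B1, hB1⟩ := hQ1.2.2
    obtain ⟨B2, hB2⟩ := hQ2.2.2
    set M := B1 + B2 + h2 + 2 with hM
    have hz : ∀ i, M ≤ i → arrive N Q1 n (i + 1) = arrive N Q2 n (i + 1) := by
      intro i hi
      have e1 : arrive N Q1 n (i + 1) = Q1 (i + 1) := by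
        simp only [arrive, ← hh1]; rw [if_neg (by omega)]
      have e2 : arrive N Q2 n (i + 1) = Q2 (i + 1) := by
        simp only [arrive, ← hh2]; rw [if_neg (by omega)]
      rw [e1, e2, hB1 _ (by omega), hB2 _ (by omega)]
    have hz' : ∀ i, M ≤ i → Q1 (i + 1) = Q2 (i + 1) := fun i hi => by
      rw [hB1 _ (by omega), hB2 _ (by omega)]
    rw [occDist_eq_sum hz, occDist_eq_sum hz']
    have key := sum_eq_two (M := M) (a := h1) (b := h2)
      (fun i => |(arrive N Q1 n (i + 1) : ℝ) - (arrive N Q2 n (i + 1) : ℝ)|)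
      (fun i => |(Q1 (i + 1) : ℝ) - (Q2 (i + 1) : ℝ)|) (by omega) (by omega) ?_
    · rw [Finset.sum_pair (show h1 ≠ h2 by omega)] at key
      have e11 : arrive N Q1 n (h1 + 1) = Q1 (h1 + 1) + 1 := by
        simp [arrive, ← hh1]
      have e12 : arrive N Q2 n (h1 + 1) = Q2 (h1 + 1) := by
        simp only [arrive, ← hh2]; rw [if_neg (by omega)]
      have e21 : arrive N Q1 n (h2 + 1) = Q1 (h2 + 1) := by
        simp only [arrive, ← hh1]; rw [if_neg (by omega)]
      have e22 : arrive N Q2 n (h2 + 1) = Q2 (h2 + 1) + 1 := by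
        simp [arrive, ← hh2]
      rw [e11, e12, e21, e22] at key
      push_cast at key
      have hkey : Q1 (h1 + 1) + 1 ≤ Q2 (h1 + 1) := by
        have c1 : Q1 (h1 + 1) < N - n + 1 := s12
        have c2 : N - n + 1 ≤ Q2 (h1 + 1) := s21 (h1 + 1) (by omega) (by omega)
        omega
      have hle' : (Q1 (h1 + 1) : ℝ) + 1 ≤ (Q2 (h1 + 1) : ℝ) := by exact_mod_cast hkey
      have h1abs : |((Q1 (h1 + 1) : ℝ) + 1) - (Q2 (h1 + 1) : ℝ)|
          = |(Q1 (h1 + 1) : ℝ) - (Q2 (h1 + 1) : ℝ)| - 1 := by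
        rw [abs_of_nonpos (by linarith), abs_of_nonpos (by linarith)]
        ring
      have habs : |(Q1 (h2 + 1) : ℝ) - ((Q2 (h2 + 1) : ℝ) + 1)|
          - |(Q1 (h2 + 1) : ℝ) - (Q2 (h2 + 1) : ℝ)| ≤ 1 := by
        have t := abs_sub_abs_le_abs_sub ((Q1 (h2 + 1) : ℝ) - ((Q2 (h2 + 1) : ℝ) + 1))
          ((Q1 (h2 + 1) : ℝ) - (Q2 (h2 + 1) : ℝ))
        have t2 : ((Q1 (h2 + 1) : ℝ) - ((Q2 (h2 + 1) : ℝ) + 1))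
            - ((Q1 (h2 + 1) : ℝ) - (Q2 (h2 + 1) : ℝ)) = -1 := by ring
        rw [t2] at t
        simpa using t
      linarith [key]
    · intro i hia hib
      have e1 : arrive N Q1 n (i + 1) = Q1 (i + 1) := by
        simp only [arrive, ← hh1]; rw [if_neg (by omega)]
      have e2 : arrive N Q2 n (i + 1) = Q2 (i + 1) := by
        simp only [arrive, ← hh2]; rw [if_neg (by omega)]
      simp only [e1, e2]

lemma arrive_same_le {N n : ℕ} {Q1 Q2 : ℕ → ℕ} (hQ1 : ValidOcc N Q1) (hQ2 : ValidOcc N Q2) :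
    occDist (arrive N Q1 n) (arrive N Q2 n) ≤ occDist Q1 Q2 := by
  rcases le_total (srvHeight N Q1 n) (srvHeight N Q2 n) with h | h
  · exact arrive_same_aux hQ1 hQ2 h
  · rw [occDist_comm, occDist_comm Q1 Q2]
    exact arrive_same_aux hQ2 hQ1 h

lemma depart_same_aux {N k : ℕ} {Q1 Q2 : ℕ → ℕ} (hQ1 : ValidOcc N Q1) (hQ2 : ValidOcc N Q2)
    (hle : srvHeight N Q1 k ≤ srvHeight N Q2 k) :
    occDist (depart N Q1 k) (depart N Q2 k) ≤ occDist Q1 Q2 := by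
  obtain ⟨s11, s12, s13, s14⟩ := srvHeight_spec hQ1 k
  obtain ⟨s21, s22, s23, s24⟩ := srvHeight_spec hQ2 k
  set g1 := srvHeight N Q1 k with hg1
  set g2 := srvHeight N Q2 k with hg2
  rcases Nat.eq_zero_or_pos g2 with hz2 | hpos2
  · apply le_of_eq
    apply tsum_congr
    intro i
    simp only [depart, ← hg1, ← hg2]
    rw [if_neg (by omega), if_neg (by omega)]
  rcases eq_or_lt_of_le hle with heq | hlt
  · -- g1 = g2 ≥ 1 : both decrement at the same position
    apply le_of_eq
    apply tsum_congr
    intro i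
    simp only [depart, ← hg1, ← hg2, ← heq]
    by_cases hi : i + 1 = g1
    · rw [if_pos ⟨by omega, hi⟩, if_pos ⟨by omega, hi⟩]
      have c1 : N - k + 1 ≤ Q1 (i + 1) := by rw [hi]; exact s11 g1 (by omega) le_rfl
      have c2 : N - k + 1 ≤ Q2 (i + 1) := by rw [hi, heq]; exact s21 g2 (by omega) le_rfl
      rw [Nat.cast_sub (by omega : 1 ≤ Q1 (i + 1)), Nat.cast_sub (by omega : 1 ≤ Q2 (i + 1))]
      push_cast
      congr 1
      ring
    · rw [if_neg (fun hc => hi hc.2), if_neg (fun hc => hi hc.2)]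
  · -- g1 < g2
    obtain ⟨B1, hB1⟩ := hQ1.2.2
    obtain ⟨B2, hB2⟩ := hQ2.2.2
    obtain ⟨m2, hm2⟩ : ∃ m, g2 = m + 1 := ⟨g2 - 1, by omega⟩
    set M := B1 + B2 + g2 + 2 with hM
    have hz : ∀ i, M ≤ i → depart N Q1 k (i + 1) = depart N Q2 k (i + 1) := by
      intro i hi
      simp only [depart, ← hg1, ← hg2]
      rw [if_neg (by omega), if_neg (by omega), hB1 _ (by omega), hB2 _ (by omega)]
    have hz' : ∀ i, M ≤ i → Q1 (i + 1) = Q2 (i + 1) := fun i hi => by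
      rw [hB1 _ (by omega), hB2 _ (by omega)]
    rw [occDist_eq_sum hz, occDist_eq_sum hz']
    -- key facts
    have hQ2g : N - k + 1 ≤ Q2 g2 := s21 g2 (by omega) le_rfl
    have hQ1g : Q1 g2 < N - k + 1 := by
      by_contra hc
      push_neg at hc
      have := s13 g2 (by omega) hc
      omega
    have hxy : Q1 g2 + 1 ≤ Q2 g2 := by omega
    have hxy' : (Q1 g2 : ℝ) + 1 ≤ (Q2 g2 : ℝ) := by exact_mod_cast hxy
    have e2g2 : depart N Q2 k g2 = Q2 g2 - 1 := by
      simp only [depart, ← hg2]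
      rw [if_pos ⟨by omega, trivial⟩]
    have e1g2 : depart N Q1 k g2 = Q1 g2 := by
      simp only [depart, ← hg1]
      rw [if_neg (by omega)]
    have castg2 : ((Q2 g2 - 1 : ℕ) : ℝ) = (Q2 g2 : ℝ) - 1 := by
      rw [Nat.cast_sub (by omega : 1 ≤ Q2 g2)]
      push_cast
      ring
    have term2 : |(depart N Q1 k (m2 + 1) : ℝ) - (depart N Q2 k (m2 + 1) : ℝ)|
        = |(Q1 (m2 + 1) : ℝ) - (Q2 (m2 + 1) : ℝ)| - 1 := by
      rw [← hm2, e1g2, e2g2, castg2]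
      rw [abs_of_nonpos (by linarith), abs_of_nonpos (by linarith)]
      ring
    rcases Nat.eq_zero_or_pos g1 with hz1 | hpos1
    · -- only system 2 changes
      have key := sum_eq_two (M := M) (a := m2) (b := m2)
        (fun i => |(depart N Q1 k (i + 1) : ℝ) - (depart N Q2 k (i + 1) : ℝ)|)
        (fun i => |(Q1 (i + 1) : ℝ) - (Q2 (i + 1) : ℝ)|) (by omega) (by omega) ?_
      · rw [show ({m2, m2} : Finset ℕ) = {m2} from by simp, Finset.sum_singleton] at key
        rw [term2] at key
        linarith [key]
      · intro i hia _
        have e1 : depart N Q1 k (i + 1) = Q1 (i + 1) := by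
          simp only [depart, ← hg1]; rw [if_neg (by omega)]
        have e2 : depart N Q2 k (i + 1) = Q2 (i + 1) := by
          simp only [depart, ← hg2]; rw [if_neg (by omega)]
        simp only [e1, e2]
    · -- both systems change, at different positions
      obtain ⟨m1, hm1⟩ : ∃ m, g1 = m + 1 := ⟨g1 - 1, by omega⟩
      have hQ1g1 : N - k + 1 ≤ Q1 g1 := s11 g1 (by omega) le_rfl
      have e1g1 : depart N Q1 k g1 = Q1 g1 - 1 := by
        simp only [depart, ← hg1]
        rw [if_pos ⟨by omega, trivial⟩]
      have e2g1 : depart N Q2 k g1 = Q2 g1 := by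
        simp only [depart, ← hg2]
        rw [if_neg (by omega)]
      have castg1 : ((Q1 g1 - 1 : ℕ) : ℝ) = (Q1 g1 : ℝ) - 1 := by
        rw [Nat.cast_sub (by omega : 1 ≤ Q1 g1)]
        push_cast
        ring
      have term1 : |(depart N Q1 k (m1 + 1) : ℝ) - (depart N Q2 k (m1 + 1) : ℝ)|
          - |(Q1 (m1 + 1) : ℝ) - (Q2 (m1 + 1) : ℝ)| ≤ 1 := by
        rw [← hm1, e1g1, e2g1, castg1]
        have t := abs_sub_abs_le_abs_sub ((Q1 g1 : ℝ) - 1 - (Q2 g1 : ℝ)) ((Q1 g1 : ℝ) - (Q2 g1 : ℝ))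
        have t2 : ((Q1 g1 : ℝ) - 1 - (Q2 g1 : ℝ)) - ((Q1 g1 : ℝ) - (Q2 g1 : ℝ)) = -1 := by ring
        rw [t2] at t
        simpa using t
      have key := sum_eq_two (M := M) (a := m1) (b := m2)
        (fun i => |(depart N Q1 k (i + 1) : ℝ) - (depart N Q2 k (i + 1) : ℝ)|)
        (fun i => |(Q1 (i + 1) : ℝ) - (Q2 (i + 1) : ℝ)|) (by omega) (by omega) ?_
      · rw [Finset.sum_pair (show m1 ≠ m2 by omega)] at key
        rw [term2] at key
        linarith [key, term1]
      · intro i hia hib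
        have e1 : depart N Q1 k (i + 1) = Q1 (i + 1) := by
          simp only [depart, ← hg1]; rw [if_neg (by omega)]
        have e2 : depart N Q2 k (i + 1) = Q2 (i + 1) := by
          simp only [depart, ← hg2]; rw [if_neg (by omega)]
        simp only [e1, e2]

lemma depart_same_le {N k : ℕ} {Q1 Q2 : ℕ → ℕ} (hQ1 : ValidOcc N Q1) (hQ2 : ValidOcc N Q2) :
    occDist (depart N Q1 k) (depart N Q2 k) ≤ occDist Q1 Q2 := by
  rcases le_total (srvHeight N Q1 k) (srvHeight N Q2 k) with h | h
  · exact depart_same_aux hQ1 hQ2 h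
  · rw [occDist_comm, occDist_comm Q1 Q2]
    exact depart_same_aux hQ2 hQ1 h

lemma arrive_diff_le {N n1 n2 : ℕ} {Q1 Q2 : ℕ → ℕ} (hQ1 : ValidOcc N Q1) (hQ2 : ValidOcc N Q2) :
    occDist (arrive N Q1 n1) (arrive N Q2 n2) ≤ occDist Q1 Q2 + 2 := by
  obtain ⟨B1, hB1⟩ := hQ1.2.2
  obtain ⟨B2, hB2⟩ := hQ2.2.2
  set h1 := srvHeight N Q1 n1 with hh1
  set h2 := srvHeight N Q2 n2 with hh2
  set M := B1 + B2 + h1 + h2 + 2 with hM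
  have z1 : ∀ i, M ≤ i → arrive N Q1 n1 (i + 1) = Q1 (i + 1) := fun i hi => by
    simp only [arrive, ← hh1]; rw [if_neg (by omega)]
  have z2 : ∀ i, M ≤ i → arrive N Q2 n2 (i + 1) = Q2 (i + 1) := fun i hi => by
    simp only [arrive, ← hh2]; rw [if_neg (by omega)]
  have q12 : ∀ i, M ≤ i → Q1 (i + 1) = Q2 (i + 1) := fun i hi => by
    rw [hB1 _ (by omega), hB2 _ (by omega)]
  have sAQ1 : Summable (fun i : ℕ => |(arrive N Q1 n1 (i + 1) : ℝ) - (Q1 (i + 1) : ℝ)|) :=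
    summable_occ (fun i hi => z1 i hi)
  have sQ1Q2 : Summable (fun i : ℕ => |(Q1 (i + 1) : ℝ) - (Q2 (i + 1) : ℝ)|) :=
    summable_occ q12
  have sQ2A2 : Summable (fun i : ℕ => |(Q2 (i + 1) : ℝ) - (arrive N Q2 n2 (i + 1) : ℝ)|) :=
    summable_occ (fun i hi => (z2 i hi).symm)
  have sQ1A2 : Summable (fun i : ℕ => |(Q1 (i + 1) : ℝ) - (arrive N Q2 n2 (i + 1) : ℝ)|) :=
    summable_occ (fun i hi => by rw [z2 i hi, q12 i hi])
  have t1 : occDist (arrive N Q1 n1) (arrive N Q2 n2)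
      ≤ occDist (arrive N Q1 n1) Q1 + occDist Q1 (arrive N Q2 n2) :=
    occDist_triangle sAQ1 sQ1A2
  have t2 : occDist Q1 (arrive N Q2 n2) ≤ occDist Q1 Q2 + occDist Q2 (arrive N Q2 n2) :=
    occDist_triangle sQ1Q2 sQ2A2
  have e1 : occDist (arrive N Q1 n1) Q1 = 1 := occDist_arrive_self Q1 n1
  have e2 : occDist Q2 (arrive N Q2 n2) = 1 := by
    rw [occDist_comm]; exact occDist_arrive_self Q2 n2
  linarith

lemma occDist_self (Q : ℕ → ℕ) : occDist Q Q = 0 := by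
  simp [occDist]

lemma diffCount_cons_arrival (n1 n2 : ℕ) (rest : List QStep) :
    diffCount (QStep.arrival n1 n2 :: rest)
      = (if n1 = n2 then 0 else 1) + diffCount rest := by
  by_cases h : n1 = n2 <;> simp [diffCount, List.filter_cons, h] <;> omega

lemma applyQ1_arrival (N n1 n2 : ℕ) (Q : ℕ → ℕ) :
    applyQ1 N (QStep.arrival n1 n2) Q = arrive N Q n1 := rfl

lemma applyQ2_arrival (N n1 n2 : ℕ) (Q : ℕ → ℕ) :
    applyQ2 N (QStep.arrival n1 n2) Q = arrive N Q n2 := rfl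

lemma applyQ1_departure (N k : ℕ) (Q : ℕ → ℕ) :
    applyQ1 N (QStep.departure k) Q = depart N Q k := rfl

lemma applyQ2_departure (N k : ℕ) (Q : ℕ → ℕ) :
    applyQ2 N (QStep.departure k) Q = depart N Q k := rfl

lemma diffCount_cons_departure (k : ℕ) (rest : List QStep) :
    diffCount (QStep.departure k :: rest) = diffCount rest := by
  simp [diffCount, List.filter_cons]

lemma fold_bound {N : ℕ} (hN : 1 ≤ N) :
    ∀ (steps : List QStep), (∀ st ∈ steps, ValidQStep N st) →
    ∀ Q1 Q2 : ℕ → ℕ, ValidOcc N Q1 → ValidOcc N Q2 →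
      occDist (steps.foldl (fun Q st => applyQ1 N st Q) Q1)
              (steps.foldl (fun Q st => applyQ2 N st Q) Q2)
        ≤ occDist Q1 Q2 + 2 * diffCount steps := by
  intro steps
  induction steps with
  | nil =>
    intro _ Q1 Q2 _ _
    simp [diffCount]
  | cons st rest ih =>
    intro hval Q1 Q2 hQ1 hQ2
    have hst : ValidQStep N st := hval st (by simp)
    have hrest : ∀ s ∈ rest, ValidQStep N s := fun s hs => hval s (by simp [hs])
    cases st with
    | arrival n1 n2 =>
      obtain ⟨hn11, hn12, hn21, hn22⟩ := hst
      simp only [List.foldl_cons, applyQ1_arrival, applyQ2_arrival, diffCount_cons_arrival]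
      have hv1 : ValidOcc N (arrive N Q1 n1) := validOcc_arrive hQ1 hn11 hn12
      have hv2 : ValidOcc N (arrive N Q2 n2) := validOcc_arrive hQ2 hn21 hn22
      have hihr := ih hrest (arrive N Q1 n1) (arrive N Q2 n2) hv1 hv2
      by_cases he : n1 = n2
      · subst he
        have := arrive_same_le (n := n1) hQ1 hQ2
        simp only [if_pos rfl]
        push_cast
        linarith
      · have := arrive_diff_le (n1 := n1) (n2 := n2) hQ1 hQ2
        rw [if_neg he]
        push_cast
        linarith
    | departure k =>
      simp only [List.foldl_cons, applyQ1_departure, applyQ2_departure, diffCount_cons_departure]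
      have hv1 : ValidOcc N (depart N Q1 k) := validOcc_depart hQ1 k
      have hv2 : ValidOcc N (depart N Q2 k) := validOcc_depart hQ2 k
      have hihr := ih hrest (depart N Q1 k) (depart N Q2 k) hv1 hv2
      have := depart_same_le (k := k) hQ1 hQ2
      linarith


/-- **Proposition 3: bounding the occupancy difference of two S-coupled systems.**
(a) Coupled arrivals to the same ordered server do not increase
`∑_i |Q¹_i − Q²_i|; (b) neither do coupled potential departures;
(c) arrivals to possibly different ordered servers increase it by at most `2`;
consequently the distance of two S-coupled systems started from the same state
is bounded by twice the number of differing decisions. -/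
theorem scoupling_distance_bound (N : ℕ) (hN : 1 ≤ N) :
    (∀ Q1 Q2 : ℕ → ℕ, ValidOcc N Q1 → ValidOcc N Q2 →
      (∀ n, 1 ≤ n → n ≤ N →
        occDist (arrive N Q1 n) (arrive N Q2 n) ≤ occDist Q1 Q2) ∧
      (∀ k, 1 ≤ k → k ≤ N →
        occDist (depart N Q1 k) (depart N Q2 k) ≤ occDist Q1 Q2) ∧
      (∀ n1 n2, 1 ≤ n1 → n1 ≤ N → 1 ≤ n2 → n2 ≤ N →
        occDist (arrive N Q1 n1) (arrive N Q2 n2) ≤ occDist Q1 Q2 + 2)) ∧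
    (∀ Q0 : ℕ → ℕ, ValidOcc N Q0 →
      ∀ steps : List QStep, (∀ st ∈ steps, ValidQStep N st) →
        occDist (steps.foldl (fun Q st => applyQ1 N st Q) Q0)
                (steps.foldl (fun Q st => applyQ2 N st Q) Q0)
          ≤ 2 * diffCount steps) := by
  constructor
  · intro Q1 Q2 hQ1 hQ2
    exact ⟨fun n _ _ => arrive_same_le hQ1 hQ2,
           fun k _ _ => depart_same_le hQ1 hQ2,
           fun n1 n2 _ _ _ _ => arrive_diff_le hQ1 hQ2⟩
  · intro Q0 hQ0 steps hsteps
    have := fold_bound hN steps hsteps Q0 Q0 hQ0 hQ0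
    rw [occDist_self] at this
    linarith
end

section
/- Fix λ ∈ (0,1), R = 2, and 0 ≤ α_2 ≤ 1/2, and set α_1 = 1 − α_2. Define r* as the largest r ∈ {1, 2} such that α_r > (1/2)·(1 − λ·∑_{i=1}^{r} α_i)/(1 − λ·r/2), with r* = 0 if no such r exists, and define λ_2 := 1 − (1 − λ·∑_{i=1}^{r*} α_i)/(1 − λ·r*/2). Then: if α_2 < 1/2 one has r* = 1, while if α_2 = 1/2 one has r* = 0; and in both cases λ_2 = λ·(1 − 2·α_2)/(2 − λ). -/
open Classical

/-- **The forwarding rate `λ₂` for the JIQ scheme with two dispatchers.**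
For `λ ∈ (0,1)`, `R = 2`, `0 ≤ α₂ ≤ 1/2`, `α₁ = 1 − α₂`, with
`r* = max{r ∈ {1,2} : α_r > (1/2)(1 − λ∑_{i≤r}α_i)/(1 − λr/2)}` (and `r* = 0`
if no such `r` exists) and `λ₂ = 1 − (1 − λ∑_{i≤r*}α_i)/(1 − λr*/2)`:
if `α₂ < 1/2` then `r* = 1`, if `α₂ = 1/2` then `r* = 0`, and in both cases
`λ₂ = λ(1 − 2α₂)/(2 − λ)`. -/
theorem jiq_two_dispatchers_lambda2
    (lam alpha2 : ℝ) (hlam : lam ∈ Set.Ioo (0 : ℝ) 1)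
    (h0 : 0 ≤ alpha2) (h12 : alpha2 ≤ 1 / 2)
    (alpha1 : ℝ) (halpha1 : alpha1 = 1 - alpha2)
    (cond : ℕ → Prop)
    (hcond1 : cond 1 ↔ alpha1 > (1 / 2) * (1 - lam * alpha1) / (1 - lam * 1 / 2))
    (hcond2 : cond 2 ↔
      alpha2 > (1 / 2) * (1 - lam * (alpha1 + alpha2)) / (1 - lam * 2 / 2))
    (rstar : ℕ)
    (hrstar : rstar = if cond 2 then 2 else if cond 1 then 1 else 0)
    (S : ℕ → ℝ) (hS0 : S 0 = 0) (hS1 : S 1 = alpha1) (hS2 : S 2 = alpha1 + alpha2)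
    (lam2 : ℝ)
    (hlam2 : lam2 = 1 - (1 - lam * S rstar) / (1 - lam * rstar / 2)) :
    (alpha2 < 1 / 2 → rstar = 1) ∧
    (alpha2 = 1 / 2 → rstar = 0) ∧
    lam2 = lam * (1 - 2 * alpha2) / (2 - lam) := by
  obtain ⟨hl0, hl1⟩ := hlam
  have hden1 : (0:ℝ) < 1 - lam * 1 / 2 := by linarith
  have hden2 : (0:ℝ) < 1 - lam * 2 / 2 := by linarith
  have hnot2 : ¬ cond 2 := by
    rw [hcond2, halpha1]
    have : (1 / 2 : ℝ) * (1 - lam * (1 - alpha2 + alpha2)) / (1 - lam * 2 / 2) = 1 / 2 := by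
      rw [div_eq_iff (ne_of_gt hden2)]
      ring
    rw [this]
    linarith
  have h1iff : cond 1 ↔ alpha2 < 1 / 2 := by
    rw [hcond1, gt_iff_lt, div_lt_iff₀ hden1, halpha1]
    constructor <;> intro h <;> nlinarith
  refine ⟨?_, ?_, ?_⟩
  · intro h
    rw [hrstar, if_neg hnot2, if_pos (h1iff.mpr h)]
  · intro h
    rw [hrstar, if_neg hnot2, if_neg (by rw [h1iff]; linarith)]
  · by_cases h : alpha2 < 1 / 2
    · have hr : rstar = 1 := by rw [hrstar, if_neg hnot2, if_pos (h1iff.mpr h)]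
      rw [hlam2, hr, hS1, halpha1]
      have h2l : (2:ℝ) - lam ≠ 0 := by linarith
      push_cast
      field_simp
      ring
    · have ha : alpha2 = 1 / 2 := le_antisymm h12 (by linarith)
      have hr : rstar = 0 := by
        rw [hrstar, if_neg hnot2, if_neg (by rw [h1iff]; linarith)]
      rw [hlam2, hr, hS0, ha]
      norm_num
end
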